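/- arXiv:1004.0113 — 9 statements merged into one kernel-verified Lean document; each statement's English description precedes it below -/
import Mathlib

section
/- Suppose that for some i ∈ ℕ one has K_{−i} = 0 and K_{−i+r} ≤ r for all 0 ≤ r ≤ i. Then f^{(i+1)}(u_0, u_{−1}, …, u_{−i}|w) = f^{(i+1)}(u_0, u_{−1}, …, u_{−i}|g*) for every w ∈ ℋ. -/
variable {G : Type*}

/-- Prepend a letter to a history: histories `w : ℕ → G` are indexed so that `w k` is
the paper's `w_{−(k+1)}`. -/
def prependHist (g : G) (w : ℕ → G) : ℕ → G := fun n => Nat.casesOn n g (fun k => w k)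

/-- Iterates of a coupling function, kept as full histories: `evolveHist f n u w` is the
history `(f^{(n)}(u_{n−1},…,u_0|w), …, f^{(1)}(u_0|w), w)`, where `u : Fin n → ℝ` lists
the random sources in forward time-order (`u 0` is used first).  In particular
`f^{(n)}(u_{n−1},…,u_0|w) = evolveHist f n u w 0`. -/
def evolveHist (f : ℝ → (ℕ → G) → G) : (n : ℕ) → (Fin n → ℝ) → (ℕ → G) → (ℕ → G)
  | 0, _, w => w
  | n + 1, u, w =>
      prependHist (f (u (Fin.last n)) (evolveHist f n (fun i => u i.castSucc) w))
        (evolveHist f n (fun i => u i.castSucc) w)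

lemma evolveHist_tail (f : ℝ → (ℕ → G) → G) :
    ∀ (m : ℕ) (uu : Fin m → ℝ) (w : ℕ → G) (n : ℕ), m ≤ n →
      evolveHist f m uu w n = w (n - m) := by
  intro m
  induction m with
  | zero => intro uu w n _; simp [evolveHist]
  | succ m ih =>
      intro uu w n hn
      obtain ⟨n', rfl⟩ : ∃ n', n = n' + 1 := ⟨n - 1, by omega⟩
      show evolveHist f m _ w n' = _
      rw [ih _ w n' (by omega)]
      congr 1
      omega

lemma evolveHist_mem (H : Set (ℕ → G)) (f : ℝ → (ℕ → G) → G)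
    (hinv : ∀ u ∈ Set.Ico (0 : ℝ) 1, ∀ w ∈ H, prependHist (f u w) w ∈ H) :
    ∀ (m : ℕ) (uu : Fin m → ℝ), (∀ k, uu k ∈ Set.Ico (0:ℝ) 1) →
      ∀ w ∈ H, evolveHist f m uu w ∈ H := by
  intro m
  induction m with
  | zero => intro uu _ w hw; exact hw
  | succ m ih =>
      intro uu huu w hw
      exact hinv _ (huu _) _ (ih _ (fun k => huu _) w hw)

/-- Pathwise content of the proof of Proposition "acca" (property H2): if for some
`i ∈ ℕ` one has `K_{−i} = 0` and `K_{−i+r} ≤ r` for all `0 ≤ r ≤ i`, then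
`f^{(i+1)}(u_0, u_{−1}, …, u_{−i}|w) = f^{(i+1)}(u_0, u_{−1}, …, u_{−i}|g*)` for every
`w ∈ ℋ`.  Here `(K_j)` has the information-depth property: for every `j ∈ ℤ`, `m ≥ K_j`
and `w ∈ ℋ` such that the history obtained from
`(f^{(m)}(u_{j−1},…,u_{j−m}|w), …, f^{(1)}(u_{j−m}|w), g*)` lies in `ℋ`, the value
`f^{(m+1)}(u_j,…,u_{j−m}|w)` equals `f` applied to `u_j` and that modified history. -/
theorem stmt1 (H : Set (ℕ → G)) (gstar : ℕ → G) (hgstar : gstar ∈ H)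
    (f : ℝ → (ℕ → G) → G)
    (hinv : ∀ u ∈ Set.Ico (0 : ℝ) 1, ∀ w ∈ H, prependHist (f u w) w ∈ H)
    (u : ℤ → ℝ) (hu : ∀ j, u j ∈ Set.Ico (0 : ℝ) 1)
    (K : ℤ → ℕ)
    (hinfo : ∀ (j : ℤ) (m : ℕ), K j ≤ m → ∀ w ∈ H,
      (fun n : ℕ => if n < m
          then evolveHist f m (fun i : Fin m => u (j - (m : ℤ) + (i : ℕ))) w n
          else gstar (n - m)) ∈ H →
      f (u j) (evolveHist f m (fun i : Fin m => u (j - (m : ℤ) + (i : ℕ))) w) =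
      f (u j) (fun n : ℕ => if n < m
          then evolveHist f m (fun i : Fin m => u (j - (m : ℤ) + (i : ℕ))) w n
          else gstar (n - m)))
    (i : ℕ) (hK0 : K (-(i : ℤ)) = 0)
    (hKr : ∀ r : ℕ, r ≤ i → K (-(i : ℤ) + (r : ℤ)) ≤ r) :
    ∀ w ∈ H,
      evolveHist f (i + 1) (fun k : Fin (i + 1) => u ((k : ℕ) - (i : ℤ))) w 0 =
      evolveHist f (i + 1) (fun k : Fin (i + 1) => u ((k : ℕ) - (i : ℤ))) gstar 0 := by
  suffices Q : ∀ r, r ≤ i + 1 → ∀ w ∈ H, ∀ n < r,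
      evolveHist f r (fun k : Fin r => u ((k : ℕ) - (i : ℤ))) w n =
      evolveHist f r (fun k : Fin r => u ((k : ℕ) - (i : ℤ))) gstar n by
    intro w hw
    exact Q (i + 1) le_rfl w hw 0 (Nat.succ_pos i)
  intro r
  induction r with
  | zero => intro _ _ _ n hn; omega
  | succ r ih =>
      intro hr w hw n hn
      have hri : r ≤ i := by omega
      have ihr := ih (by omega)
      have hmap : ∀ w' : ℕ → G,
          evolveHist f r (fun k : Fin r =>
            (fun k : Fin (r+1) => u ((k : ℕ) - (i : ℤ))) k.castSucc) w' =
          evolveHist f r (fun k : Fin r => u ((k : ℕ) - (i : ℤ))) w' := by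
        intro w'
        rfl
      match n with
      | Nat.succ n' =>
        have h1 : ∀ w', evolveHist f (r+1) (fun k : Fin (r+1) => u ((k : ℕ) - (i : ℤ))) w' (n'+1)
            = evolveHist f r (fun k : Fin r => u ((k : ℕ) - (i : ℤ))) w' n' := by
          intro w'
          show evolveHist f r (fun k : Fin r =>
            (fun k : Fin (r+1) => u ((k : ℕ) - (i : ℤ))) k.castSucc) w' n' = _
          rw [hmap]
        rw [h1, h1]
        exact ihr w hw n' (by omega)
      | 0 =>
        set j : ℤ := -(i : ℤ) + r with hj
        have hjmap : ∀ w', evolveHist f r (fun k : Fin r => u (j - (r : ℤ) + (k : ℕ))) w'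
            = evolveHist f r (fun k : Fin r => u ((k : ℕ) - (i : ℤ))) w' := by
          intro w'
          have hm : (fun k : Fin r => u (j - (r : ℤ) + (k : ℕ)))
              = (fun k : Fin r => u ((k : ℕ) - (i : ℤ))) := by
            funext k
            congr 1
            simp only [hj]
            omega
          rw [hm]
        have h0 : ∀ w', evolveHist f (r+1) (fun k : Fin (r+1) => u ((k : ℕ) - (i : ℤ))) w' 0
            = f (u j) (evolveHist f r (fun k : Fin r => u ((k : ℕ) - (i : ℤ))) w') := by
          intro w'
          show f ((fun k : Fin (r+1) => u ((k : ℕ) - (i : ℤ))) (Fin.last r))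
            (evolveHist f r (fun k : Fin r =>
              (fun k : Fin (r+1) => u ((k : ℕ) - (i : ℤ))) k.castSucc) w') = _
          rw [hmap]
          have hv : (((Fin.last r : Fin (r+1)) : ℕ) : ℤ) - (i : ℤ) = j := by
            simp only [hj, Fin.val_last]
            omega
          simp only [hv]
        rw [h0, h0]
        have hEg : evolveHist f r (fun k : Fin r => u ((k : ℕ) - (i : ℤ))) gstar ∈ H :=
          evolveHist_mem H f hinv r _ (fun k => hu _) gstar hgstar
        have hmod : ∀ w' ∈ H,
            (fun n : ℕ => if n < r
              then evolveHist f r (fun k : Fin r => u ((k : ℕ) - (i : ℤ))) w' n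
              else gstar (n - r)) =
            evolveHist f r (fun k : Fin r => u ((k : ℕ) - (i : ℤ))) gstar := by
          intro w' hw'
          funext m
          by_cases hm : m < r
          · simp only [hm, if_true]
            exact ihr w' hw' m hm
          · simp only [hm, if_false]
            rw [evolveHist_tail f r _ gstar m (by omega)]
        have key : ∀ w' ∈ H,
            f (u j) (evolveHist f r (fun k : Fin r => u ((k : ℕ) - (i : ℤ))) w') =
            f (u j) (evolveHist f r (fun k : Fin r => u ((k : ℕ) - (i : ℤ))) gstar) := by
          intro w' hw'
          have := hinfo j r (by rw [hj]; exact hKr r hri) w' hw' (by simp only [hjmap]; rw [hmod w' hw']; exact hEg)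
          rw [hjmap, hmod w' hw'] at this
          exact this
        rw [key w hw, key gstar hgstar]
end

section
/- If μ(R) > 0, then for μ-almost every ω there exists m ∈ ℕ such that K(S^{l−m} ω) ≤ l for all l ∈ ℕ; in particular τ[0,∞](ω) := sup{s ≤ 0 : K(S^j ω) ≤ j − s for all integers j ≥ s} is finite μ-almost surely. -/
/-!
Coordinates that are i.i.d. make the shift `S` mixing on cylinder sets, hence ergodic.
The set `U = ⋃ₘ S⁻ᵐ R` contains `R` and satisfies `U ⊆ S⁻¹ U`, so ergodicity forces
`μ U = 1` as soon as `μ R > 0`. For `ω ∈ S⁻ᵐ R` the required bounds hold with that `m`,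
and `s = -m` shows that `τ[0,∞](ω)` is finite.
-/

open MeasureTheory ProbabilityTheory Filter Set
open scoped symmDiff

lemma Set.inter_symmDiff_inter_subset {α : Type*} (s t u v : Set α) :
    (s ∩ t) ∆ (u ∩ v) ⊆ s ∆ u ∪ t ∆ v := by
  intro x
  simp only [mem_symmDiff, mem_inter_iff, mem_union]
  tauto

lemma Finset.eventually_disjoint_image_add_natCast (s t : Finset ℤ) :
    ∀ᶠ n : ℕ in atTop, Disjoint s (t.image (· + (n : ℤ))) := by
  obtain ⟨N, hN⟩ := s.bddAbove
  obtain ⟨M, hM⟩ := t.bddBelow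
  filter_upwards [eventually_gt_atTop (N - M).toNat] with n hn
  rw [Finset.disjoint_right]
  rintro _ himage hi
  obtain ⟨j, hj, rfl⟩ := Finset.mem_image.1 himage
  have := hN hi
  have := hM hj
  omega

section Mixing

variable {α : Type*} [MeasurableSpace α] {μ : Measure α} [IsProbabilityMeasure μ]

/-- `s = s ∩ g⁻¹' s` is close to `B ∩ g⁻¹' B`, whose measure is `μ B ^ 2`. -/
lemma abs_measureReal_sub_sq_le {g : α → α} (hg : MeasurePreserving g μ μ) {s B : Set α}
    (hs : MeasurableSet s) (hgs : g ⁻¹' s = s) (hB : MeasurableSet B)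
    (hmix : μ (B ∩ g ⁻¹' B) = μ B * μ B) :
    |μ.real s - μ.real s ^ 2| ≤ 4 * μ.real (s ∆ B) := by
  set d := μ.real (s ∆ B)
  have hsB : |μ.real s - μ.real B| ≤ d :=
    abs_measureReal_sub_le_measureReal_symmDiff hs.nullMeasurableSet hB.nullMeasurableSet
  have hinter : |μ.real s - μ.real B ^ 2| ≤ 2 * d := by
    have hreal : μ.real (B ∩ g ⁻¹' B) = μ.real B ^ 2 := by
      simp only [measureReal_def, hmix, ENNReal.toReal_mul, sq]
    calc |μ.real s - μ.real B ^ 2|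
        = |μ.real (s ∩ g ⁻¹' s) - μ.real (B ∩ g ⁻¹' B)| := by
          rw [hgs, inter_self, hreal]
      _ ≤ μ.real ((s ∩ g ⁻¹' s) ∆ (B ∩ g ⁻¹' B)) :=
        abs_measureReal_sub_le_measureReal_symmDiff
          (hs.inter (hg.measurable hs)).nullMeasurableSet
          (hB.inter (hg.measurable hB)).nullMeasurableSet
      _ ≤ μ.real (s ∆ B ∪ g ⁻¹' (s ∆ B)) :=
        measureReal_mono (inter_symmDiff_inter_subset _ _ _ _)
      _ ≤ d + μ.real (g ⁻¹' (s ∆ B)) := measureReal_union_le _ _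
      _ = 2 * d := by
        rw [hg.measureReal_preimage (hs.symmDiff hB).nullMeasurableSet]; ring
  have hsq : |μ.real B ^ 2 - μ.real s ^ 2| ≤ 2 * d := by
    have hsum : |μ.real B + μ.real s| ≤ 2 := by
      rw [abs_le]
      constructor <;> linarith [measureReal_nonneg (μ := μ) (s := B),
        measureReal_nonneg (μ := μ) (s := s), measureReal_le_one (μ := μ) (s := B),
        measureReal_le_one (μ := μ) (s := s)]
    rw [abs_sub_comm] at hsB
    calc |μ.real B ^ 2 - μ.real s ^ 2| = |μ.real B - μ.real s| * |μ.real B + μ.real s| := by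
          rw [← abs_mul]; congr 1; ring
      _ ≤ d * 2 := mul_le_mul hsB hsum (abs_nonneg _) (hsB.trans' (abs_nonneg _))
      _ = 2 * d := mul_comm _ _
  calc |μ.real s - μ.real s ^ 2|
      ≤ |μ.real s - μ.real B ^ 2| + |μ.real B ^ 2 - μ.real s ^ 2| := abs_sub_le _ _ _
    _ ≤ 4 * d := by linarith

theorem Ergodic.of_measureDense {f : α → α} (hf : MeasurePreserving f μ μ)
    {𝒜 : Set (Set α)} (h𝒜 : μ.MeasureDense 𝒜)
    (hmix : ∀ B ∈ 𝒜, ∃ n, μ (B ∩ f^[n] ⁻¹' B) = μ B * μ B) : Ergodic f μ := by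
  refine ⟨hf, ⟨fun s hs hfs => ?_⟩⟩
  have hidem : μ.real s = μ.real s ^ 2 := by
    refine eq_of_abs_sub_nonpos (le_of_forall_pos_le_add fun ε hε => ?_)
    obtain ⟨B, hB𝒜, hsB⟩ := h𝒜.approx s hs (measure_ne_top μ s) (ε / 4) (by positivity)
    obtain ⟨n, hn⟩ := hmix B hB𝒜
    have hd : μ.real (s ∆ B) ≤ ε / 4 :=
      ENNReal.toReal_le_of_le_ofReal (by positivity) hsB.le
    have := abs_measureReal_sub_sq_le (hf.iterate n) hs
      (Function.IsFixedPt.preimage_iterate hfs n) (h𝒜.measurable B hB𝒜) hn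
    linarith
  have h01 : μ s = 0 ∨ μ s = 1 := by
    have : μ.real s * (1 - μ.real s) = 0 := by linear_combination hidem
    rcases mul_eq_zero.1 this with h | h
    · exact Or.inl ((measureReal_eq_zero_iff).1 h)
    · exact Or.inr ((ENNReal.toReal_eq_one_iff _).1 (by rw [← measureReal_def]; linarith))
  rw [eventuallyConst_set']
  exact h01.imp ae_eq_empty.2 fun h =>
    (ae_eq_univ_iff_measure_eq hs.nullMeasurableSet).2 (h.trans measure_univ.symm)

end Mixing

theorem Ergodic.ae_mem_of_subset_preimage {α : Type*} [MeasurableSpace α] {μ : Measure α}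
    [IsFiniteMeasure μ] {f : α → α} (hf : Ergodic f μ) {s : Set α} (hs : MeasurableSet s)
    (hfs : s ⊆ f ⁻¹' s) (hpos : 0 < μ s) : ∀ᵐ x ∂μ, x ∈ s := by
  rcases hf.ae_empty_or_univ_of_ae_le_preimage hs.nullMeasurableSet hfs.eventuallyLE with h | h
  · exact absurd (ae_eq_empty.1 h) hpos.ne'
  · exact ae_iff.2 (ae_eq_univ.1 h)

namespace BernoulliShift

variable {X : Type*}

def shift (n : ℤ) (ω : ℤ → X) : ℤ → X := fun i => ω (i + n)

@[simp]
lemma shift_apply (n : ℤ) (ω : ℤ → X) (i : ℤ) : shift n ω i = ω (i + n) := rfl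

@[simp]
lemma shift_zero (ω : ℤ → X) : shift 0 ω = ω := by
  ext i; simp

lemma shift_shift (m n : ℤ) (ω : ℤ → X) : shift m (shift n ω) = shift (m + n) ω := by
  ext i; simp [add_assoc]

lemma iterate_shift_one (n : ℕ) : (shift 1 : (ℤ → X) → ℤ → X)^[n] = shift n := by
  induction n with
  | zero => ext ω i; simp
  | succ n ih => ext ω i; simp [ih, add_assoc]

section Measure

variable [MeasurableSpace X]

@[fun_prop]
lemma measurable_shift (n : ℤ) : Measurable (shift n : (ℤ → X) → ℤ → X) := by
  unfold shift; fun_prop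

lemma shift_eq_piCongrLeft (n : ℤ) :
    (shift n : (ℤ → X) → ℤ → X) =
      MeasurableEquiv.piCongrLeft (fun _ => X) (Equiv.subRight n) := by
  ext ω i
  simp [MeasurableEquiv.coe_piCongrLeft, Equiv.piCongrLeft_apply]

variable {μ : Measure (ℤ → X)} {ν : Measure X}

lemma eq_infinitePi_of_iIndepFun (hind : iIndepFun (fun i (ω : ℤ → X) => ω i) μ)
    (hident : ∀ i, μ.map (fun ω => ω i) = ν) [IsProbabilityMeasure ν] :
    μ = Measure.infinitePi (fun _ : ℤ => ν) := by
  simpa [hident] using hind.map_fun_eq_infinitePi_map₀ (by fun_prop)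

lemma measurePreserving_shift [IsProbabilityMeasure μ]
    (hind : iIndepFun (fun i (ω : ℤ → X) => ω i) μ)
    (hident : ∀ i, μ.map (fun ω => ω i) = ν) (n : ℤ) :
    MeasurePreserving (shift n) μ μ := by
  have : IsProbabilityMeasure ν :=
    hident 0 ▸ Measure.isProbabilityMeasure_map (measurable_pi_apply 0).aemeasurable
  rw [eq_infinitePi_of_iIndepFun hind hident, shift_eq_piCongrLeft]
  exact ⟨MeasurableEquiv.measurable _,
    Measure.infinitePi_map_piCongrLeft (fun _ : ℤ => ν) (Equiv.subRight n)⟩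

/-- For large `n`, `B` and `shift n ⁻¹' C` depend on disjoint sets of coordinates. -/
lemma eventually_measure_inter_preimage_shift [IsProbabilityMeasure μ]
    (hind : iIndepFun (fun i (ω : ℤ → X) => ω i) μ)
    (hident : ∀ i, μ.map (fun ω => ω i) = ν)
    {B C : Set (ℤ → X)} (hB : B ∈ measurableCylinders fun _ : ℤ => X)
    (hC : C ∈ measurableCylinders fun _ : ℤ => X) :
    ∀ᶠ n : ℕ in atTop, μ (B ∩ shift n ⁻¹' C) = μ B * μ C := by
  obtain ⟨s, S, hS, rfl⟩ := (mem_measurableCylinders B).1 hB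
  obtain ⟨t, T, hT, rfl⟩ := (mem_measurableCylinders C).1 hC
  filter_upwards [s.eventually_disjoint_image_add_natCast t] with n hn
  let r : (t.image (· + (n : ℤ)) → X) → t → X :=
    fun x j => x ⟨j + n, Finset.mem_image_of_mem _ j.2⟩
  have hr : Measurable r := measurable_pi_lambda _ fun j => measurable_pi_apply _
  have hindep : μ (cylinder s S ∩ shift n ⁻¹' cylinder t T)
      = μ (cylinder s S) * μ (shift n ⁻¹' cylinder t T) :=
    (hind.indepFun_finset s _ hn measurable_pi_apply).measure_inter_preimage_eq_mul _ _
      hS (hr hT)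
  rw [hindep, (measurePreserving_shift hind hident n).measure_preimage
    (MeasurableSet.cylinder t hT).nullMeasurableSet]

theorem ergodic_shift_one [IsProbabilityMeasure μ]
    (hind : iIndepFun (fun i (ω : ℤ → X) => ω i) μ)
    (hident : ∀ i, μ.map (fun ω => ω i) = ν) :
    Ergodic (shift 1) μ := by
  refine Ergodic.of_measureDense (measurePreserving_shift hind hident 1)
    (Measure.MeasureDense.of_generateFrom_isSetAlgebra_finite μ
      isSetAlgebra_measurableCylinders generateFrom_measurableCylinders.symm) fun B hB => ?_
  simpa [iterate_shift_one] using
    (eventually_measure_inter_preimage_shift hind hident hB hB).exists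

end Measure

section Renewal

variable (K : (ℤ → X) → ℕ)

/-- The event `R`. -/
def renewalSet : Set (ℤ → X) := {ω | ∀ n : ℕ, K (shift n ω) ≤ n}

lemma iUnion_preimage_shift_renewalSet_subset :
    (⋃ m : ℕ, shift (-m) ⁻¹' renewalSet K) ⊆
      shift 1 ⁻¹' ⋃ m : ℕ, shift (-m) ⁻¹' renewalSet K := by
  simp only [subset_def, mem_iUnion, mem_preimage]
  rintro ω ⟨m, hm⟩
  exact ⟨m + 1, by rwa [shift_shift, Nat.cast_add_one, neg_add, neg_add_cancel_right]⟩

lemma measurableSet_renewalSet [MeasurableSpace X] (hK : Measurable K) :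
    MeasurableSet (renewalSet K) := by
  simp only [renewalSet, ofPred_forall]
  exact MeasurableSet.iInter fun n => (hK.comp (measurable_shift n)) measurableSet_Iic

lemma le_of_mem_preimage_shift_renewalSet {K} {m : ℕ} {ω : ℤ → X}
    (h : shift (-m) ω ∈ renewalSet K) (l : ℕ) : K (shift (l - m) ω) ≤ l := by
  simpa [shift_shift, sub_eq_add_neg] using h l

lemma exists_le_sub_of_mem_preimage_shift_renewalSet {K} {m : ℕ} {ω : ℤ → X}
    (h : shift (-m) ω ∈ renewalSet K) :
    ∃ s : ℤ, s ≤ 0 ∧ ∀ j : ℤ, s ≤ j → (K (shift j ω) : ℤ) ≤ j - s := by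
  refine ⟨-m, by omega, fun j hj => ?_⟩
  have := le_of_mem_preimage_shift_renewalSet h (j + m).toNat
  rw [Int.toNat_of_nonneg (by omega), add_sub_cancel_right] at this
  omega

end Renewal

end BernoulliShift

open BernoulliShift

/-- Proposition "rinnovo": on `Ω = ℤ → [0,1)` with `μ` the product of uniform measures
(characterized here by independence of the coordinates together with their uniform
distribution on `[0,1)`), let `K : Ω → ℕ` be measurable, `K_j(ω) = K(S^j ω)` where `S` is
the shift `(S^j ω)_i = ω_{i+j}`, and `R = {K_n ≤ n for all n ∈ ℕ}`. If `μ(R) > 0` then for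
`μ`-a.e. `ω` there is `m ∈ ℕ` with `K(S^{l−m} ω) ≤ l` for all `l ∈ ℕ`; in particular
`τ[0,∞] = sup{s ≤ 0 : K(S^j ω) ≤ j − s for all j ≥ s}` is finite `μ`-a.s. -/
theorem stmt4 (μ : Measure (ℤ → ℝ)) [IsProbabilityMeasure μ]
    (hIndep : ProbabilityTheory.iIndepFun
      (fun i (ω : ℤ → ℝ) => ω i) μ)
    (hUnif : ∀ i : ℤ, Measure.map (fun ω : ℤ → ℝ => ω i) μ =
      volume.restrict (Set.Ico (0 : ℝ) 1))
    (K : (ℤ → ℝ) → ℕ) (hK : Measurable K)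
    (hR : 0 < μ {ω | ∀ n : ℕ, K (fun i => ω (i + (n : ℤ))) ≤ n}) :
    ∀ᵐ ω ∂μ,
      (∃ m : ℕ, ∀ l : ℕ, K (fun i => ω (i + ((l : ℤ) - (m : ℤ)))) ≤ l) ∧
      (∃ s : ℤ, s ≤ 0 ∧ ∀ j : ℤ, s ≤ j →
        ((K (fun i => ω (i + j)) : ℤ) ≤ j - s)) := by
  have hRU : renewalSet K ⊆ ⋃ m : ℕ, shift (-m) ⁻¹' renewalSet K := fun ω hω =>
    mem_iUnion.2 ⟨0, by simpa using hω⟩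
  have hU := (ergodic_shift_one hIndep hUnif).ae_mem_of_subset_preimage
    (MeasurableSet.iUnion fun m => measurable_shift _ (measurableSet_renewalSet K hK))
    (iUnion_preimage_shift_renewalSet_subset K) (hR.trans_le (measure_mono hRU))
  filter_upwards [hU] with ω hω
  obtain ⟨m, hm⟩ := mem_iUnion.1 hω
  exact ⟨⟨m, le_of_mem_preimage_shift_renewalSet hm⟩,
    exists_le_sub_of_mem_preimage_shift_renewalSet hm⟩
end

section
/- If Σ_{k=0}^∞ Π_{j=0}^k a_j = ∞ (which forces a_k ↑ 1 as k → ∞), then almost surely there exists an integer s ≤ 0 such that K(U_j) ≤ j − s for every integer j with s ≤ j ≤ 0; i.e. τ_0 := sup{s ≤ 0 : K(U_j) ≤ j − s for all s ≤ j ≤ 0} > −∞ almost surely. -/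
/-!
Write `x n = U (-n)` and call `t` a ladder of `x` if `x n < a (t - n)` for all `n ≤ t`, i.e. if
`s = -t` is admissible; ladders have probability `p t = ∏_{k ≤ t} a k`. Fix `T` and, for `t ≤ T`,
let `E t` be the event that `t` is a ladder while the shifted sequence `x (t + 1 + ·)` has no
ladder shorter than `T - t`. The events `E t` are disjoint, because a ladder `t' ∈ (t, T]` of `x`
restricts to the ladder `t' - t - 1` of the shifted sequence. Independence and shift invariance
give `P (E t) ≥ p t * P (no ladder ≤ T)`, hence `P (no ladder ≤ T) * ∑_{t ≤ T} p t ≤ 1`, and the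
divergence of `∑ p t` forces `P (no ladder) = 0`.
-/

open MeasureTheory ENNReal ProbabilityTheory Finset

section Ladder

variable {α : Type*}

def seqShift (m : ℕ) (x : ℕ → α) : ℕ → α := fun n ↦ x (m + n)

def ladder (B : ℕ → Set α) (t : ℕ) : Set (ℕ → α) :=
  (range (t + 1) : Set ℕ).pi fun n ↦ B (t - n)

lemma ladder_add_subset_preimage_seqShift (B : ℕ → Set α) (m r : ℕ) :
    ladder B (m + r) ⊆ seqShift m ⁻¹' ladder B r := by
  intro x hx n hn
  have hn' : n < r + 1 := mem_range.1 hn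
  have : x (m + n) ∈ B (m + r - (m + n)) := hx (m + n) (mem_range.2 (by omega))
  rwa [show m + r - (m + n) = r - n by omega] at this

variable [mα : MeasurableSpace α]

lemma measurableSet_ladder {B : ℕ → Set α} (hB : ∀ k, MeasurableSet (B k)) (t : ℕ) :
    MeasurableSet[⨆ n < t + 1, mα.comap fun x : ℕ → α ↦ x n] (ladder B t) := by
  rw [ladder, Set.pi_def]
  refine MeasurableSet.biInter (range (t + 1)).countable_toSet fun n hn ↦ ?_
  exact le_iSup₂ (f := fun n (_ : n < t + 1) ↦ mα.comap fun x : ℕ → α ↦ x n) n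
    (mem_range.1 hn) _ ⟨_, hB (t - n), rfl⟩

lemma measurable_seqShift_iSup (m : ℕ) :
    Measurable[⨆ n ≥ m, mα.comap fun x : ℕ → α ↦ x n] (seqShift m : (ℕ → α) → ℕ → α) := by
  refine @measurable_pi_lambda _ _ _ (_) _ _ fun k ↦ ?_
  exact (comap_measurable _).mono
    (le_iSup₂ (f := fun n (_ : n ≥ m) ↦ mα.comap fun x : ℕ → α ↦ x n) (m + k) (by omega)) le_rfl

variable (μ : Measure α) [IsProbabilityMeasure μ]

lemma measurePreserving_seqShift (m : ℕ) :
    MeasurePreserving (seqShift m) (Measure.infinitePi fun _ ↦ μ)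
      (Measure.infinitePi fun _ ↦ μ) :=
  ⟨measurable_pi_iff.2 fun k ↦ measurable_pi_apply (m + k),
    Measure.map_infinitePi_infinitePi_of_inj (add_right_injective m)⟩

lemma infinitePi_inter_preimage_seqShift {m : ℕ} {A S : Set (ℕ → α)}
    (hA : MeasurableSet[⨆ n < m, mα.comap fun x : ℕ → α ↦ x n] A) (hS : MeasurableSet S) :
    Measure.infinitePi (fun _ ↦ μ) (A ∩ seqShift m ⁻¹' S)
      = Measure.infinitePi (fun _ ↦ μ) A * Measure.infinitePi (fun _ ↦ μ) S := by
  have hindep := indep_iSup_of_disjoint (fun n ↦ (measurable_pi_apply n).comap_le)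
    (iIndepFun_infinitePi (P := fun _ ↦ μ) (X := fun _ ↦ id) fun _ ↦ measurable_id).iIndep
    (Set.disjoint_left.2 fun n (h : n < m) (h' : m ≤ n) ↦ (h.trans_le h').false)
  rw [(Indep_iff _ _ _).1 hindep _ _ hA (measurable_seqShift_iSup m hS),
    (measurePreserving_seqShift μ m).measure_preimage hS.nullMeasurableSet]

lemma infinitePi_ladder {B : ℕ → Set α} (hB : ∀ k, MeasurableSet (B k)) (t : ℕ) :
    Measure.infinitePi (fun _ ↦ μ) (ladder B t) = ∏ k ∈ range (t + 1), μ (B k) := by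
  rw [ladder, Measure.infinitePi_pi _ fun n _ ↦ hB (t - n)]
  exact prod_range_reflect (fun k ↦ μ (B k)) (t + 1)

lemma infinitePi_compl_iUnion_ladder_mul_sum_le {B : ℕ → Set α}
    (hB : ∀ k, MeasurableSet (B k)) (T : ℕ) :
    Measure.infinitePi (fun _ ↦ μ) (⋃ t ∈ range (T + 1), ladder B t)ᶜ
      * ∑ t ∈ range (T + 1), ∏ k ∈ range (t + 1), μ (B k) ≤ 1 := by
  set ν := Measure.infinitePi fun _ : ℕ ↦ μ
  have hL : ∀ t, MeasurableSet (ladder B t) := fun t ↦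
    iSup₂_le (fun n _ ↦ (measurable_pi_apply n).comap_le) _ (measurableSet_ladder hB t)
  have hN : ∀ L, MeasurableSet (⋃ r ∈ range L, ladder B r)ᶜ := fun L ↦
    (MeasurableSet.biUnion (range L).countable_toSet fun r _ ↦ hL r).compl
  set E : ℕ → Set (ℕ → α) := fun t ↦
    ladder B t ∩ seqShift (t + 1) ⁻¹' (⋃ r ∈ range (T - t), ladder B r)ᶜ
  have hE : ∀ t, ν (E t)
      = (∏ k ∈ range (t + 1), μ (B k)) * ν (⋃ r ∈ range (T - t), ladder B r)ᶜ := fun t ↦ by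
    rw [infinitePi_inter_preimage_seqShift μ (measurableSet_ladder hB t) (hN _),
      infinitePi_ladder μ hB]
  have le_of_mem_E : ∀ t t', t' ≤ T → ∀ x ∈ E t, x ∈ E t' → t' ≤ t :=
    fun t t' ht' x hx hx' ↦ not_lt.1 fun htt' ↦ by
      have := ladder_add_subset_preimage_seqShift B (t + 1) (t' - (t + 1))
        (by rw [Nat.add_sub_cancel' htt']; exact hx'.1)
      exact hx.2 (Set.mem_biUnion (mem_range.2 (by omega)) this)
  have hdisj : (range (T + 1) : Set ℕ).PairwiseDisjoint E := by
    refine Set.pairwiseDisjoint_iff.2 fun t ht t' ht' ⟨x, hx, hx'⟩ ↦ ?_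
    simp only [coe_range, Set.mem_Iio] at ht ht'
    exact le_antisymm (le_of_mem_E t' t (by omega) x hx' hx) (le_of_mem_E t t' (by omega) x hx hx')
  calc ν (⋃ t ∈ range (T + 1), ladder B t)ᶜ * ∑ t ∈ range (T + 1), ∏ k ∈ range (t + 1), μ (B k)
      ≤ ∑ t ∈ range (T + 1), ν (E t) := by
        rw [mul_sum]
        refine sum_le_sum fun t _ ↦ ?_
        rw [hE, mul_comm]
        gcongr with r
        exact Set.iUnion_subset_iUnion_const fun hr ↦ mem_range.2 (by grind)
    _ = ν (⋃ t ∈ range (T + 1), E t) := (measure_biUnion_finset hdisj fun t _ ↦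
        (hL t).inter ((measurePreserving_seqShift μ _).measurable (hN _))).symm
    _ ≤ 1 := prob_le_one

theorem ae_exists_mem_ladder {B : ℕ → Set α} (hB : ∀ k, MeasurableSet (B k))
    (hdiv : ∑' k, ∏ j ∈ range (k + 1), μ (B j) = ∞) :
    ∀ᵐ x ∂Measure.infinitePi (fun _ ↦ μ), ∃ t, x ∈ ladder B t := by
  set ν := Measure.infinitePi fun _ : ℕ ↦ μ
  have hbound : ν (⋃ t, ladder B t)ᶜ * ∑' k, ∏ j ∈ range (k + 1), μ (B j) ≤ 1 := by
    rw [ENNReal.tsum_eq_iSup_nat' (Filter.tendsto_add_atTop_nat 1), ENNReal.mul_iSup]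
    refine iSup_le fun T ↦ le_trans ?_ (infinitePi_compl_iUnion_ladder_mul_sum_le μ hB T)
    exact mul_le_mul_left
      (measure_mono (Set.compl_subset_compl.2 (Set.iUnion₂_subset_iUnion _ _))) _
  have hzero : ν (⋃ t, ladder B t)ᶜ = 0 := by
    by_contra hne
    rw [hdiv, ENNReal.mul_top hne] at hbound
    exact absurd hbound (by simp)
  filter_upwards [measure_eq_zero_iff_ae_notMem.1 hzero] with x hx
  simpa using hx

end Ladder

lemma volume_restrict_Ico_zero_one_Iio {c : ℝ} (hc : c ≤ 1) :
    volume.restrict (Set.Ico (0 : ℝ) 1) (Set.Iio c) = ENNReal.ofReal c := by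
  rw [Measure.restrict_apply measurableSet_Iio, Set.inter_comm, Set.Ico_inter_Iio,
    min_eq_right hc, Real.volume_Ico, sub_zero]

theorem stmt5_general {Ω : Type*} [MeasurableSpace Ω] (P : Measure Ω)
    (U : ℤ → Ω → ℝ) (hUmeas : ∀ i, Measurable (U i))
    (hIndep : ProbabilityTheory.iIndepFun U P)
    (hUnif : ∀ i, Measure.map (U i) P = volume.restrict (Set.Ico (0 : ℝ) 1))
    (a : ℕ → ℝ) (ha01 : ∀ k, a k ∈ Set.Icc (0 : ℝ) 1)
    (K : ℝ → ℕ∞)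
    (hK : ∀ u : ℝ, K u = sInf ((fun k : ℕ => (k : ℕ∞)) '' {k : ℕ | u < a k}))
    (hdiv : ∑' k : ℕ, ∏ j ∈ Finset.range (k + 1), ENNReal.ofReal (a j) = ⊤) :
    ∀ᵐ ω ∂P, ∃ s : ℤ, s ≤ 0 ∧
      ∀ j : ℤ, s ≤ j → j ≤ 0 → K (U j ω) ≤ (((j - s).toNat : ℕ) : ℕ∞) := by
  have : IsProbabilityMeasure (volume.restrict (Set.Ico (0 : ℝ) 1)) := ⟨by simp⟩
  have hX : Measurable fun ω (n : ℕ) ↦ U (-n) ω := measurable_pi_lambda _ fun n ↦ hUmeas _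
  have hlaw : P.map (fun ω (n : ℕ) ↦ U (-n) ω)
      = Measure.infinitePi fun _ ↦ volume.restrict (Set.Ico (0 : ℝ) 1) := by
    have hinj : Function.Injective fun n : ℕ ↦ -(n : ℤ) := neg_injective.comp Nat.cast_injective
    rw [(hIndep.precomp hinj).map_fun_eq_infinitePi_map fun n ↦ hUmeas _]
    simp only [hUnif]
  have hdiv' : ∑' k, ∏ j ∈ range (k + 1), volume.restrict (Set.Ico (0 : ℝ) 1) (Set.Iio (a j))
      = ∞ := by
    simpa only [volume_restrict_Ico_zero_one_Iio (ha01 _).2] using hdiv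
  have hae := ae_exists_mem_ladder _ (fun k ↦ measurableSet_Iio) hdiv'
  rw [← hlaw] at hae
  filter_upwards [ae_of_ae_map hX.aemeasurable hae] with ω ⟨t, ht⟩
  refine ⟨-t, by omega, fun j hsj hj0 ↦ ?_⟩
  obtain ⟨n, rfl⟩ : ∃ n : ℕ, j = -n := ⟨(-j).toNat, by omega⟩
  rw [hK, show (-(n : ℤ) - -(t : ℤ)).toNat = t - n by omega]
  exact sInf_le ⟨t - n, ht n (mem_range.2 (by omega)), rfl⟩

/-- Part (a) of Proposition "th0": let `(U_i)_{i∈ℤ}` be i.i.d. uniform on `[0,1)`,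
`(a_k)` nondecreasing in `[0,1]` and `K(u) = inf{k : a_k > u}` (`∞` if no such `k`).
If `Σ_{k=0}^∞ Π_{j=0}^k a_j = ∞`, then almost surely
`τ_0 = sup{s ≤ 0 : K(U_j) ≤ j − s for all s ≤ j ≤ 0} > −∞`. -/
theorem stmt5 {Ω : Type*} [MeasurableSpace Ω] (P : Measure Ω) [IsProbabilityMeasure P]
    (U : ℤ → Ω → ℝ) (hUmeas : ∀ i, Measurable (U i))
    (hIndep : ProbabilityTheory.iIndepFun U P)
    (hUnif : ∀ i, Measure.map (U i) P = volume.restrict (Set.Ico (0 : ℝ) 1))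
    (a : ℕ → ℝ) (ha01 : ∀ k, a k ∈ Set.Icc (0 : ℝ) 1) (hmono : Monotone a)
    (K : ℝ → ℕ∞)
    (hK : ∀ u : ℝ, K u = sInf ((fun k : ℕ => (k : ℕ∞)) '' {k : ℕ | u < a k}))
    (hdiv : ∑' k : ℕ, ∏ j ∈ Finset.range (k + 1), ENNReal.ofReal (a j) = ⊤) :
    ∀ᵐ ω ∂P, ∃ s : ℤ, s ≤ 0 ∧
      ∀ j : ℤ, s ≤ j → j ≤ 0 → K (U j ω) ≤ (((j - s).toNat : ℕ) : ℕ∞) :=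
  stmt5_general P U hUmeas hIndep hUnif a ha01 K hK hdiv
end

section
/- If Π_{j=0}^∞ a_j > 0, then P(K(U_n) ≤ n for all n ∈ ℕ) > 0, and almost surely τ[0,∞] := sup{s ≤ 0 : K(U_j) ≤ j − s for all integers j ≥ s} is finite. -/
/-!
Since `a` is monotone, `K u ≤ m ↔ u < a m`, so both claims concern events `{U j < a (j - s)}`;
for independent uniforms a window of `L` such constraints has probability `∏_{k<L} a k ≥ c`,
where `c > 0` is the infinite product. The first claim is the window `s = 0`, `L = ∞`.

For the second, `c > 0` makes `∑ (1 - a k)` finite, so by the first Borel–Cantelli lemma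
`U j < a |j|` for all but finitely many `j ∈ ℤ`; as `a k → 1` and `U j < 1`, some `m` gives
`U j < a (max m |j|)` for every `j`. The windows `[-2^(n+1), -2^n)` are disjoint, so by the
second Borel–Cantelli lemma infinitely many of them are satisfied. For such an `n` with
`m ≤ 2^n`, `s = -2^(n+1)` works: beyond the window, `j - s ≥ max m |j|`.
-/

open MeasureTheory ProbabilityTheory Filter Finset Function

lemma sInf_natCast_image_le_iff {α : Type*} [Preorder α] {a : ℕ → α} (hmono : Monotone a)
    (u : α) (m : ℕ) : sInf ((fun k : ℕ => (k : ℕ∞)) '' {k | u < a k}) ≤ m ↔ u < a m := by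
  refine ⟨fun h => ?_, fun h => sInf_le ⟨m, h, rfl⟩⟩
  have hne : ((fun k : ℕ => (k : ℕ∞)) '' {k | u < a k}).Nonempty := by
    by_contra hempty
    simp [Set.not_nonempty_iff_eq_empty.mp hempty] at h
  obtain ⟨k, hk, hkeq⟩ := csInf_mem hne
  rw [← hkeq, Nat.cast_le] at h
  exact hk.trans_le (hmono h)

lemma summable_one_sub_of_le_prod {a : ℕ → ℝ} {c : ℝ} (hc : 0 < c) (ha : ∀ k, a k ≤ 1)
    (hprod : ∀ n, c ≤ ∏ k ∈ range n, a k) : Summable fun k => 1 - a k := by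
  have hpos : ∀ n, 0 < ∏ k ∈ range n, a k := fun n => hc.trans_le (hprod n)
  have ha_pos : ∀ k, 0 < a k := fun k =>
    pos_of_mul_pos_right (prod_range_succ a k ▸ hpos (k + 1)) (hpos k).le
  refine summable_of_sum_range_le (c := -Real.log c) (fun k => by linarith [ha k]) fun n => ?_
  calc ∑ k ∈ range n, (1 - a k) ≤ ∑ k ∈ range n, -Real.log (a k) :=
        sum_le_sum fun k _ => by linarith [Real.log_le_sub_one_of_pos (ha_pos k)]
    _ = -Real.log (∏ k ∈ range n, a k) := by
        rw [Real.log_prod fun k _ => (ha_pos k).ne', sum_neg_distrib]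
    _ ≤ -Real.log c := neg_le_neg (Real.log_le_log hc (hprod n))

lemma prod_Ico_toNat_sub {M : Type*} [CommMonoid M] (f : ℕ → M) (s : ℤ) (L : ℕ) :
    ∏ j ∈ Ico s (s + L), f (j - s).toNat = ∏ k ∈ range L, f k :=
  prod_nbij' (fun j => (j - s).toNat) (fun k => s + k)
    (fun j hj => by simp only [mem_Ico, mem_range] at hj ⊢; omega)
    (fun k hk => by simp only [mem_Ico, mem_range] at hk ⊢; omega)
    (fun j hj => by simp only [mem_Ico] at hj; omega) (fun k _ => by simp) fun _ _ => rfl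

section Uniform

variable {Ω : Type*} [MeasurableSpace Ω] {P : Measure Ω} {X : Ω → ℝ}

lemma measure_preimage_Iio_of_map_eq (hX : Measurable X)
    (hunif : P.map X = volume.restrict (Set.Ico 0 1)) {t : ℝ} (ht : t ≤ 1) :
    P (X ⁻¹' Set.Iio t) = ENNReal.ofReal t := by
  rw [← Measure.map_apply hX measurableSet_Iio, hunif, Measure.restrict_apply measurableSet_Iio,
    Set.inter_comm, Set.Ico_inter_Iio, min_eq_right ht, Real.volume_Ico, sub_zero]

lemma measure_preimage_Ici_of_map_eq (hX : Measurable X)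
    (hunif : P.map X = volume.restrict (Set.Ico 0 1)) {t : ℝ} (ht : 0 ≤ t) :
    P (X ⁻¹' Set.Ici t) = ENNReal.ofReal (1 - t) := by
  rw [← Measure.map_apply hX measurableSet_Ici, hunif, Measure.restrict_apply measurableSet_Ici,
    Set.inter_comm, Set.Ico_inter_Ici, max_eq_right ht, Real.volume_Ico]

lemma ae_lt_one_of_map_eq (hX : Measurable X)
    (hunif : P.map X = volume.restrict (Set.Ico 0 1)) : ∀ᵐ ω ∂P, X ω < 1 :=
  ae_of_ae_map hX.aemeasurable (hunif ▸ (ae_restrict_mem measurableSet_Ico).mono fun _ hx => hx.2)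

end Uniform

section Independent

variable {Ω ι : Type*} [MeasurableSpace Ω] {P : Measure Ω}

lemma iIndepSet_biInter_preimage {β : Type*} [MeasurableSpace β] {U : ι → Ω → β}
    (hU : ∀ i, Measurable (U i)) (hIndep : iIndepFun U P) {blk : ℕ → Finset ι}
    (hdisj : Pairwise (Disjoint on blk)) {S : ℕ → ι → Set β} (hS : ∀ n i, MeasurableSet (S n i)) :
    iIndepSet (fun n => ⋂ i ∈ blk n, U i ⁻¹' S n i) P := by
  classical
  -- by disjointness each set depends on `i` alone, so `⋂ n ∈ T` becomes `⋂ i ∈ T.biUnion blk`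
  let owner : ι → ℕ := fun i => if h : ∃ n, i ∈ blk n then h.choose else 0
  have howner : ∀ n, ∀ i ∈ blk n, owner i = n := fun n i hi => by
    have h : ∃ n, i ∈ blk n := ⟨n, hi⟩
    simp only [owner, dif_pos h]
    by_contra hne
    exact Finset.disjoint_left.mp (hdisj hne) h.choose_spec hi
  have hblock : ∀ n, ⋂ i ∈ blk n, U i ⁻¹' S n i = ⋂ i ∈ blk n, U i ⁻¹' S (owner i) i :=
    fun n => Set.iInter₂_congr fun i hi => by rw [howner n i hi]
  rw [iIndepSet_iff_meas_biInter fun n => (blk n).measurableSet_biInter fun i _ => hU i (hS n i)]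
  intro T
  simp only [hblock]
  rw [← Finset.set_biInter_biUnion, hIndep.meas_biInter fun i _ => ⟨_, hS _ i, rfl⟩,
    prod_biUnion fun m _ n _ hmn => hdisj hmn]
  exact prod_congr rfl fun n _ => (hIndep.meas_biInter fun i _ => ⟨_, hS _ i, rfl⟩).symm

lemma measure_biInter_preimage_Iio {U : ι → Ω → ℝ} (hU : ∀ i, Measurable (U i))
    (hIndep : iIndepFun U P) (hunif : ∀ i, P.map (U i) = volume.restrict (Set.Ico 0 1))
    (s : Finset ι) {b : ι → ℝ} (hb : ∀ i ∈ s, b i ≤ 1) :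
    P (⋂ i ∈ s, U i ⁻¹' Set.Iio (b i)) = ∏ i ∈ s, ENNReal.ofReal (b i) := by
  rw [hIndep.meas_biInter fun i _ => ⟨_, measurableSet_Iio, rfl⟩]
  exact prod_congr rfl fun i hi => measure_preimage_Iio_of_map_eq (hU i) (hunif i) (hb i hi)

lemma ae_finite_setOf_le_natAbs {U : ℤ → Ω → ℝ} {a : ℕ → ℝ} (hU : ∀ j, Measurable (U j))
    (hunif : ∀ j, P.map (U j) = volume.restrict (Set.Ico 0 1)) (ha01 : ∀ k, a k ∈ Set.Icc 0 1)
    (hsum : Summable fun k => 1 - a k) :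
    ∀ᵐ ω ∂P, {j | a j.natAbs ≤ U j ω}.Finite := by
  have hsumℤ : Summable fun j : ℤ => 1 - a j.natAbs :=
    .of_nat_of_neg (by simpa using hsum) (by simpa using hsum)
  refine ae_finite_setOfPred_mem (s := fun j => U j ⁻¹' Set.Ici (a j.natAbs)) ?_
  simp only [fun j => measure_preimage_Ici_of_map_eq (hU j) (hunif j) (ha01 j.natAbs).1]
  rw [← ENNReal.ofReal_tsum_of_nonneg (fun j => sub_nonneg.2 (ha01 _).2) hsumℤ]
  exact ENNReal.ofReal_ne_top

end Independent

lemma exists_forall_lt_max {a : ℕ → ℝ} (hmono : Monotone a) (ha : Tendsto a atTop (nhds 1))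
    {u : ℤ → ℝ} (hu : ∀ j, u j < 1) (hfin : {j | a j.natAbs ≤ u j}.Finite) :
    ∃ m, ∀ j, u j < a (max m j.natAbs) := by
  obtain ⟨m, hm⟩ := ((eventually_all_finite hfin).2 fun j _ =>
    ha.eventually_const_lt (hu j)).exists_forall_of_atTop
  refine ⟨m, fun j => ?_⟩
  by_cases hj : a j.natAbs ≤ u j
  · exact hm _ (le_max_left _ _) j hj
  · exact (not_le.1 hj).trans_le (hmono (le_max_right _ _))

/-- Left end of the `n`-th window `[-2^(n+1), -2^(n+1) + 2^n)`. -/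
def blockStart (n : ℕ) : ℤ := -2 ^ (n + 1)

lemma pairwise_disjoint_Ico_blockStart :
    Pairwise (Disjoint on fun n => Ico (blockStart n) (blockStart n + 2 ^ n)) := by
  refine (pairwise_disjoint_on _).2 fun m n hmn => disjoint_left.2 fun j hjm hjn => ?_
  have h : (2 : ℤ) ^ (m + 1) ≤ 2 ^ n := pow_le_pow_right₀ one_le_two hmn
  simp only [blockStart, mem_Ico, pow_succ] at hjm hjn h
  omega

lemma lt_of_forall_lt_max_of_block {a : ℕ → ℝ} (hmono : Monotone a) {u : ℤ → ℝ} {m n : ℕ}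
    (hm : ∀ j, u j < a (max m j.natAbs)) (hmn : m ≤ 2 ^ n)
    (hblock : ∀ j ∈ Ico (blockStart n) (blockStart n + 2 ^ n),
      u j < a (j - blockStart n).toNat)
    {j : ℤ} (hj : blockStart n ≤ j) : u j < a (j - blockStart n).toNat := by
  by_cases hjb : j < blockStart n + 2 ^ n
  · exact hblock j (mem_Ico.2 ⟨hj, hjb⟩)
  · refine (hm j).trans_le (hmono ?_)
    have hcast : ((2 ^ n : ℕ) : ℤ) = 2 ^ n := by push_cast; rfl
    simp only [blockStart, pow_succ] at hjb ⊢
    omega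

section Probability

variable {Ω : Type*} [MeasurableSpace Ω] {P : Measure Ω} [IsProbabilityMeasure P] {a : ℕ → ℝ}
  {U : ℤ → Ω → ℝ}

lemma measure_setOf_forall_lt_pos {V : ℕ → Ω → ℝ} (hV : ∀ n, Measurable (V n))
    (hIndep : iIndepFun V P) (hunif : ∀ n, P.map (V n) = volume.restrict (Set.Ico 0 1))
    (ha01 : ∀ k, a k ∈ Set.Icc 0 1) {c : ℝ} (hc : 0 < c) (hprod : ∀ n, c ≤ ∏ k ∈ range n, a k) :
    0 < P {ω | ∀ n, V n ω < a n} := by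
  set F : ℕ → Set Ω := fun N => ⋂ n ∈ range N, V n ⁻¹' Set.Iio (a n)
  have hF : {ω | ∀ n, V n ω < a n} = ⋂ N, F N := by
    ext ω
    simp only [F, Set.mem_ofPred_eq, Set.mem_iInter, mem_range, Set.mem_preimage, Set.mem_Iio]
    exact ⟨fun h N n _ => h n, fun h n => h (n + 1) n n.lt_succ_self⟩
  have hF_anti : Antitone F := fun M N hMN =>
    Set.iInter₂_mono' fun n hn => ⟨n, range_mono hMN hn, le_rfl⟩
  have hF_meas : ∀ N, NullMeasurableSet (F N) P := fun N =>
    ((range N).measurableSet_biInter fun n _ => hV n measurableSet_Iio).nullMeasurableSet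
  have hPF : ∀ N, P (F N) = ENNReal.ofReal (∏ k ∈ range N, a k) := fun N => by
    rw [measure_biInter_preimage_Iio hV hIndep hunif _ fun k _ => (ha01 k).2,
      ENNReal.ofReal_prod_of_nonneg fun k _ => (ha01 k).1]
  rw [hF, hF_anti.measure_iInter hF_meas ⟨0, measure_ne_top P _⟩]
  refine (ENNReal.ofReal_pos.2 hc).trans_le (le_iInf fun N => ?_)
  rw [hPF]
  exact ENNReal.ofReal_le_ofReal (hprod N)

lemma ae_frequently_block (hU : ∀ j, Measurable (U j)) (hIndep : iIndepFun U P)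
    (hunif : ∀ j, P.map (U j) = volume.restrict (Set.Ico 0 1)) (ha01 : ∀ k, a k ∈ Set.Icc 0 1)
    {c : ℝ} (hc : 0 < c) (hprod : ∀ n, c ≤ ∏ k ∈ range n, a k) :
    ∀ᵐ ω ∂P, ∃ᶠ n in atTop, ∀ j ∈ Ico (blockStart n) (blockStart n + 2 ^ n),
      U j ω < a (j - blockStart n).toNat := by
  set B : ℕ → Set Ω := fun n => ⋂ j ∈ Ico (blockStart n) (blockStart n + 2 ^ n),
    U j ⁻¹' Set.Iio (a (j - blockStart n).toNat)
  have hB_meas : ∀ n, MeasurableSet (B n) := fun n =>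
    measurableSet_biInter _ fun j _ => hU j measurableSet_Iio
  have hPB : ∀ n, ENNReal.ofReal c ≤ P (B n) := fun n => by
    have hL : blockStart n + 2 ^ n = blockStart n + ((2 ^ n : ℕ) : ℤ) := by push_cast; rfl
    rw [measure_biInter_preimage_Iio hU hIndep hunif _ fun j _ => (ha01 _).2, hL,
      prod_Ico_toNat_sub (fun k => ENNReal.ofReal (a k)),
      ← ENNReal.ofReal_prod_of_nonneg fun k _ => (ha01 k).1]
    exact ENNReal.ofReal_le_ofReal (hprod _)
  have hsum : ∑' n, P (B n) = ⊤ := top_unique <|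
    (ENNReal.tsum_const_eq_top_of_ne_zero (ENNReal.ofReal_pos.2 hc).ne').symm.le.trans
      (ENNReal.tsum_le_tsum hPB)
  have hlimsup := measure_limsup_eq_one hB_meas
    (iIndepSet_biInter_preimage hU hIndep pairwise_disjoint_Ico_blockStart
      fun _ _ => measurableSet_Iio) hsum
  have hae := (ae_iff_measure_eq (MeasurableSet.measurableSet_limsup hB_meas).nullMeasurableSet).2
    (hlimsup.trans measure_univ.symm)
  filter_upwards [hae] with ω hω
  simpa [B] using mem_limsup_iff_frequently_mem.1 hω

lemma ae_exists_forall_lt (hU : ∀ j, Measurable (U j)) (hIndep : iIndepFun U P)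
    (hunif : ∀ j, P.map (U j) = volume.restrict (Set.Ico 0 1)) (ha01 : ∀ k, a k ∈ Set.Icc 0 1)
    (hmono : Monotone a) {c : ℝ} (hc : 0 < c) (hprod : ∀ n, c ≤ ∏ k ∈ range n, a k) :
    ∀ᵐ ω ∂P, ∃ s : ℤ, s ≤ 0 ∧ ∀ j, s ≤ j → U j ω < a (j - s).toNat := by
  have hsum := summable_one_sub_of_le_prod hc (fun k => (ha01 k).2) hprod
  have ha : Tendsto a atTop (nhds 1) := by
    simpa using hsum.tendsto_atTop_zero.const_sub 1
  filter_upwards [ae_all_iff.2 fun j => ae_lt_one_of_map_eq (hU j) (hunif j),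
    ae_finite_setOf_le_natAbs hU hunif ha01 hsum,
    ae_frequently_block hU hIndep hunif ha01 hc hprod] with ω hlt hfin hfreq
  obtain ⟨m, hm⟩ := exists_forall_lt_max hmono ha hlt hfin
  obtain ⟨n, hmn, hblock⟩ := frequently_atTop.1 hfreq m
  exact ⟨blockStart n, by simp [blockStart], fun j hj =>
    lt_of_forall_lt_max_of_block hmono hm (hmn.trans Nat.lt_two_pow_self.le) hblock hj⟩

end Probability

/-- Part (b) of Proposition "th0": let `(U_i)_{i∈ℤ}` be i.i.d. uniform on `[0,1)`,
`(a_k)` nondecreasing in `[0,1]` and `K(u) = inf{k : a_k > u}` (`∞` if no such `k`).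
If `Π_{j=0}^∞ a_j > 0`, then `P(K(U_n) ≤ n for all n ∈ ℕ) > 0` and almost surely
`τ[0,∞] = sup{s ≤ 0 : K(U_j) ≤ j − s for all j ≥ s} > −∞`. -/
theorem stmt6 {Ω : Type*} [MeasurableSpace Ω] (P : Measure Ω) [IsProbabilityMeasure P]
    (U : ℤ → Ω → ℝ) (hUmeas : ∀ i, Measurable (U i))
    (hIndep : ProbabilityTheory.iIndepFun U P)
    (hUnif : ∀ i, Measure.map (U i) P = volume.restrict (Set.Ico (0 : ℝ) 1))
    (a : ℕ → ℝ) (ha01 : ∀ k, a k ∈ Set.Icc (0 : ℝ) 1) (hmono : Monotone a)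
    (K : ℝ → ℕ∞)
    (hK : ∀ u : ℝ, K u = sInf ((fun k : ℕ => (k : ℕ∞)) '' {k : ℕ | u < a k}))
    (hpos : 0 < ⨅ n : ℕ, ∏ j ∈ Finset.range n, a j) :
    0 < P {ω | ∀ n : ℕ, K (U (n : ℤ) ω) ≤ (n : ℕ∞)} ∧
    ∀ᵐ ω ∂P, ∃ s : ℤ, s ≤ 0 ∧
      ∀ j : ℤ, s ≤ j → K (U j ω) ≤ (((j - s).toNat : ℕ) : ℕ∞) := by
  have hprod : ∀ n, (⨅ n : ℕ, ∏ j ∈ range n, a j) ≤ ∏ j ∈ range n, a j :=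
    ciInf_le ⟨0, Set.forall_mem_range.2 fun n => prod_nonneg fun j _ => (ha01 j).1⟩
  have hKle : ∀ u (m : ℕ), K u ≤ m ↔ u < a m := fun u m =>
    hK u ▸ sInf_natCast_image_le_iff hmono u m
  refine ⟨?_, ?_⟩
  · simpa only [hKle] using measure_setOf_forall_lt_pos (fun n => hUmeas n)
      (hIndep.precomp Nat.cast_injective) (fun n => hUnif n) ha01 hpos hprod
  · filter_upwards [ae_exists_forall_lt hUmeas hIndep hUnif ha01 hmono hpos hprod]
      with ω ⟨s, hs, hlt⟩
    exact ⟨s, hs, fun j hj => (hKle _ _).2 (hlt j hj)⟩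
end

section
/- If the random variable Π_{h=0}^∞ A_h(U_{h−1},…,U_0)^{−1} (the nondecreasing limit of the partial products, with values in [1,∞]) is integrable, then P(U_h < A_h(U_{h−1},…,U_0) for every h ∈ ℕ) > 0. -/
open MeasureTheory ENNReal Filter ProbabilityTheory Topology

/-!
The products `M n = ∏_{h<n} 1{U_h < A_h} / A_h` all have mean one: given `U_0, …, U_{h-1}`,
the variable `U_h` is still uniform on `[0,1)`, so the new factor integrates to `A_h / A_h = 1`.
Pointwise, `M n` tends to `Π_h A_h⁻¹` on the event `E = {U_h < A_h for all h}` and to `0` off it,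
and it is dominated by the integrable `Π_h A_h⁻¹`. Dominated convergence gives
`∫_E Π_h A_h⁻¹ dP = 1`, which is impossible if `P E = 0`.
-/

noncomputable def thresholdWeight (a t : ℝ) : ℝ≥0∞ :=
  if t < a then (ENNReal.ofReal a)⁻¹ else 0

lemma measurable_thresholdWeight : Measurable fun p : ℝ × ℝ => thresholdWeight p.1 p.2 :=
  Measurable.ite (measurableSet_lt measurable_snd measurable_fst)
    (measurable_ofReal.comp measurable_fst).inv measurable_const

lemma thresholdWeight_le (a t : ℝ) : thresholdWeight a t ≤ (ENNReal.ofReal a)⁻¹ := by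
  unfold thresholdWeight
  split_ifs <;> simp

lemma setLIntegral_thresholdWeight_Ico {a : ℝ} (ha : a ∈ Set.Ioc 0 1) :
    ∫⁻ t in Set.Ico 0 1, thresholdWeight a t = 1 := by
  have hind : thresholdWeight a = (Set.Iio a).indicator fun _ => (ENNReal.ofReal a)⁻¹ := by
    ext t
    simp [thresholdWeight, Set.indicator_apply]
  have hinter : Set.Iio a ∩ Set.Ico 0 1 = Set.Ico 0 a := by
    rw [Set.inter_comm, Set.Ico_inter_Iio, min_eq_right ha.2]
  rw [hind, lintegral_indicator measurableSet_Iio, setLIntegral_const,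
    Measure.restrict_apply measurableSet_Iio, hinter, Real.volume_Ico, sub_zero,
    ENNReal.inv_mul_cancel (by simpa using ha.1) ofReal_ne_top]

lemma lintegral_mul_thresholdWeight_of_indepFun {Ω α : Type*} [MeasurableSpace Ω]
    [MeasurableSpace α] {P : Measure Ω} [IsFiniteMeasure P] {X : Ω → α} {Y : Ω → ℝ}
    (hX : Measurable X) (hY : Measurable Y) (hXY : IndepFun X Y P)
    (hY_unif : P.map Y = volume.restrict (Set.Ico 0 1)) {a : α → ℝ} (ha : Measurable a)
    (ha_mem : ∀ᵐ ω ∂P, a (X ω) ∈ Set.Ioc 0 1) {g : α → ℝ≥0∞} (hg : Measurable g) :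
    ∫⁻ ω, g (X ω) * thresholdWeight (a (X ω)) (Y ω) ∂P = ∫⁻ ω, g (X ω) ∂P := by
  have hF : Measurable fun p : α × ℝ => g p.1 * thresholdWeight (a p.1) p.2 :=
    (hg.comp measurable_fst).mul
      (measurable_thresholdWeight.comp ((ha.comp measurable_fst).prodMk measurable_snd))
  have ha_mem' : ∀ᵐ x ∂P.map X, a x ∈ Set.Ioc 0 1 :=
    (ae_map_iff hX.aemeasurable (ha measurableSet_Ioc)).2 ha_mem
  calc ∫⁻ ω, g (X ω) * thresholdWeight (a (X ω)) (Y ω) ∂P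
      = ∫⁻ p, g p.1 * thresholdWeight (a p.1) p.2
          ∂(P.map X).prod (volume.restrict (Set.Ico 0 1)) := by
        rw [← hY_unif, ← (indepFun_iff_map_prod_eq_prod_map_map hX.aemeasurable
          hY.aemeasurable).1 hXY, lintegral_map hF (hX.prodMk hY)]
    _ = ∫⁻ x, g x * (∫⁻ t in Set.Ico 0 1, thresholdWeight (a x) t) ∂P.map X := by
        rw [lintegral_prod _ hF.aemeasurable]
        exact lintegral_congr fun x => lintegral_const_mul (g x)
          (measurable_thresholdWeight.comp (measurable_const.prodMk measurable_id) :
            Measurable fun t => thresholdWeight (a x) t)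
    _ = ∫⁻ x, g x ∂P.map X :=
        lintegral_congr_ae <| ha_mem'.mono fun x hx => by
          simp only [setLIntegral_thresholdWeight_Ico hx, mul_one]
    _ = ∫⁻ ω, g (X ω) ∂P := lintegral_map hg hX

lemma ProbabilityTheory.iIndepFun.indepFun_finPrefix {Ω β : Type*} [MeasurableSpace Ω]
    [MeasurableSpace β] {P : Measure Ω} {U : ℕ → Ω → β} (hU : ∀ i, Measurable (U i))
    (h : iIndepFun U P) (n : ℕ) : IndepFun (fun ω (i : Fin n) => U i ω) (U n) P := by
  have hdisj : Disjoint (Finset.range n) {n} := by simp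
  have hrestrict : Measurable fun (v : Finset.range n → β) (i : Fin n) =>
      v ⟨i, Finset.mem_range.2 i.2⟩ :=
    measurable_pi_lambda _ fun _ => measurable_pi_apply _
  exact (h.indepFun_finset _ _ hdisj hU).comp hrestrict
    (measurable_pi_apply ⟨n, Finset.mem_singleton_self n⟩)

/-- The partial product `M n` as a function of `(U_0, …, U_{n-1})`, so that the independence of
`U n` from this vector can be used. -/
noncomputable def prefixWeight (A : (h : ℕ) → (Fin h → ℝ) → ℝ) :
    (n : ℕ) → (Fin n → ℝ) → ℝ≥0∞
  | 0, _ => 1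
  | n + 1, u => prefixWeight A n (Fin.init u) * thresholdWeight (A n (Fin.init u)) (u (Fin.last n))

lemma measurable_prefixWeight {A : (h : ℕ) → (Fin h → ℝ) → ℝ} (hA : ∀ h, Measurable (A h))
    (n : ℕ) : Measurable (prefixWeight A n) := by
  induction n with
  | zero => exact measurable_const
  | succ n ih =>
    have hinit : Measurable fun u : Fin (n + 1) → ℝ => Fin.init u :=
      measurable_pi_lambda _ fun i => measurable_pi_apply _
    exact (ih.comp hinit).mul (measurable_thresholdWeight.comp
      (((hA n).comp hinit).prodMk (measurable_pi_apply _)))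

lemma prefixWeight_apply (A : (h : ℕ) → (Fin h → ℝ) → ℝ) (u : ℕ → ℝ) (n : ℕ) :
    prefixWeight A n (fun i : Fin n => u i) =
      ∏ h ∈ Finset.range n, thresholdWeight (A h fun i : Fin h => u i) (u h) := by
  induction n with
  | zero => rfl
  | succ n ih =>
    rw [Finset.prod_range_succ, ← ih]
    rfl

lemma lintegral_prefixWeight_eq_one {Ω : Type*} [MeasurableSpace Ω] {P : Measure Ω}
    [IsProbabilityMeasure P] {U : ℕ → Ω → ℝ} (hU : ∀ i, Measurable (U i))
    (hIndep : iIndepFun U P) (hUnif : ∀ i, P.map (U i) = volume.restrict (Set.Ico 0 1))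
    {A : (h : ℕ) → (Fin h → ℝ) → ℝ} (hA : ∀ h, Measurable (A h))
    (hA_mem : ∀ᵐ ω ∂P, ∀ h, A h (fun i : Fin h => U i ω) ∈ Set.Ioc 0 1) (n : ℕ) :
    ∫⁻ ω, prefixWeight A n (fun i : Fin n => U i ω) ∂P = 1 := by
  induction n with
  | zero => simp [prefixWeight]
  | succ n ih =>
    rw [← ih]
    exact lintegral_mul_thresholdWeight_of_indepFun (X := fun ω (i : Fin n) => U i ω)
      (measurable_pi_lambda _ fun i => hU i) (hU n) (hIndep.indepFun_finPrefix hU n) (hUnif n)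
      (hA n) (hA_mem.mono fun ω hω => hω n) (measurable_prefixWeight hA n)

section Products

variable {a : ℕ → ℝ} (ha : ∀ h, a h ≤ 1)
include ha

lemma monotone_prod_range_inv_ofReal :
    Monotone fun n => ∏ h ∈ Finset.range n, (ENNReal.ofReal (a h))⁻¹ :=
  fun _ _ hmn => Finset.prod_le_prod_of_subset_of_one_le' (Finset.range_mono hmn)
    fun h _ _ => ENNReal.one_le_inv.2 (ofReal_le_one.2 (ha h))

lemma prod_range_thresholdWeight_le_iSup (u : ℕ → ℝ) (n : ℕ) :
    ∏ h ∈ Finset.range n, thresholdWeight (a h) (u h) ≤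
      ⨆ m, ∏ h ∈ Finset.range (m + 1), (ENNReal.ofReal (a h))⁻¹ :=
  calc ∏ h ∈ Finset.range n, thresholdWeight (a h) (u h)
      ≤ ∏ h ∈ Finset.range n, (ENNReal.ofReal (a h))⁻¹ :=
        Finset.prod_le_prod' fun _ _ => thresholdWeight_le _ _
    _ ≤ ∏ h ∈ Finset.range (n + 1), (ENNReal.ofReal (a h))⁻¹ :=
        monotone_prod_range_inv_ofReal ha n.le_succ
    _ ≤ ⨆ m, ∏ h ∈ Finset.range (m + 1), (ENNReal.ofReal (a h))⁻¹ :=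
        le_iSup (fun m => ∏ h ∈ Finset.range (m + 1), (ENNReal.ofReal (a h))⁻¹) n

open scoped Classical in
lemma tendsto_prod_range_thresholdWeight (u : ℕ → ℝ) :
    Tendsto (fun n => ∏ h ∈ Finset.range n, thresholdWeight (a h) (u h)) atTop
      (𝓝 (if ∀ h, u h < a h then ⨆ m, ∏ h ∈ Finset.range (m + 1), (ENNReal.ofReal (a h))⁻¹
        else 0)) := by
  split_ifs with hlt
  · rw [← tendsto_add_atTop_iff_nat 1]
    simp only [thresholdWeight, if_pos (hlt _)]
    exact tendsto_atTop_iSup fun m n hmn => monotone_prod_range_inv_ofReal ha (by omega)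
  · push Not at hlt
    obtain ⟨h₀, hh₀⟩ := hlt
    refine tendsto_const_nhds.congr' ((eventually_gt_atTop h₀).mono fun n hn => ?_)
    exact (Finset.prod_eq_zero (Finset.mem_range.2 hn) (if_neg hh₀.not_gt)).symm

end Products

/-- Theorem "rinnov": with `(U_h)_{h∈ℕ}` i.i.d. uniform on `[0,1)`, `A_0 ∈ (0,1]`
constant and `A_h : [0,1)^h → (0,1]` Borel measurable, if the random variable
`Π_{h=0}^∞ A_h(U_{h−1},…,U_0)^{−1}` (the nondecreasing limit of the partial products,
with values in `[1,∞]`) is integrable, then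
`P(U_h < A_h(U_{h−1},…,U_0) for every h) > 0`. -/
theorem stmt8 {Ω : Type*} [MeasurableSpace Ω] (P : Measure Ω) [IsProbabilityMeasure P]
    (U : ℕ → Ω → ℝ) (hUmeas : ∀ i, Measurable (U i))
    (hIndep : ProbabilityTheory.iIndepFun U P)
    (hUnif : ∀ i, Measure.map (U i) P = volume.restrict (Set.Ico (0 : ℝ) 1))
    (A : (h : ℕ) → (Fin h → ℝ) → ℝ) (hAmeas : ∀ h, Measurable (A h))
    (hA : ∀ (h : ℕ) (u : Fin h → ℝ), (∀ i, u i ∈ Set.Ico (0 : ℝ) 1) →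
      A h u ∈ Set.Ioc (0 : ℝ) 1)
    (hint : ∫⁻ ω, (⨆ n : ℕ, ∏ h ∈ Finset.range (n + 1),
        (ENNReal.ofReal (A h (fun i : Fin h => U (i : ℕ) ω)))⁻¹) ∂P < ⊤) :
    0 < P {ω | ∀ h : ℕ, U h ω < A h (fun i : Fin h => U (i : ℕ) ω)} := by
  have hU_mem : ∀ᵐ ω ∂P, ∀ i, U i ω ∈ Set.Ico (0 : ℝ) 1 := ae_all_iff.2 fun i =>
    ae_of_ae_map (hUmeas i).aemeasurable (hUnif i ▸ ae_restrict_mem measurableSet_Ico)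
  have hA_mem : ∀ᵐ ω ∂P, ∀ h, A h (fun i : Fin h => U i ω) ∈ Set.Ioc 0 1 :=
    hU_mem.mono fun ω hω h => hA h _ fun i => hω i
  have hlim := tendsto_lintegral_of_dominated_convergence
    (F := fun n ω => prefixWeight A n fun i : Fin n => U i ω) _
    (fun n => (measurable_prefixWeight hAmeas n).comp (measurable_pi_lambda _ fun i => hUmeas i))
    (fun n => hA_mem.mono fun ω hω => (prefixWeight_apply A (U · ω) n).trans_le
      (prod_range_thresholdWeight_le_iSup (fun h => (hω h).2) _ n))
    hint.ne
    (hA_mem.mono fun ω hω => (tendsto_prod_range_thresholdWeight (fun h => (hω h).2) _).congr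
      fun n => (prefixWeight_apply A (U · ω) n).symm)
  simp only [lintegral_prefixWeight_eq_one hUmeas hIndep hUnif hAmeas hA_mem] at hlim
  refine pos_iff_ne_zero.2 fun hE => one_ne_zero (α := ℝ≥0∞) ?_
  rw [tendsto_nhds_unique tendsto_const_nhds hlim]
  exact (lintegral_congr_ae ((measure_eq_zero_iff_ae_notMem.1 hE).mono
    fun ω hω => if_neg hω)).trans lintegral_zero
end

section
/- N is almost surely finite, and E[s^N] < ∞ for every real s ≥ 1 with s²(1 − 2pq) < 1; in particular N is stochastically dominated by twice a geometric random variable with success probability 2pq. -/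
open MeasureTheory ENNReal ProbabilityTheory Function

/-! If `N > n`, none of the disjoint consecutive pairs `(U_{2k}, U_{2k+1})`, `2k + 1 ≤ n`, is a
switch. These pairs are independent and each is a switch with probability `2pq`, so
`P(N > n) ≤ (1 - 2pq)^⌊n/2⌋`. Almost sure finiteness follows, and the pointwise bound
`s^N ≤ 1 + ∑ₙ s^(n+1) 1{N > n}` turns the tail bound into a geometric series in
`s²(1 - 2pq)`. -/

theorem ENat.natCast_lt_sInf_image_natCast_iff {S : Set ℕ} {n : ℕ} :
    (n : ℕ∞) < sInf ((fun m : ℕ => (m : ℕ∞)) '' S) ↔ ∀ m ∈ S, n < m := by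
  rw [← ENat.add_one_le_iff (ENat.natCast_ne_top n), le_sInf_iff, Set.forall_mem_image]
  exact forall₂_congr fun m _ => by norm_cast

namespace ProbabilityTheory.iIndepFun

variable {Ω β : Type*} [MeasurableSpace Ω] [MeasurableSpace β] {μ : Measure Ω}

theorem blocks {ι κ : Type*} {f : ι → Ω → β} (hf : iIndepFun f μ) (hmeas : ∀ i, Measurable (f i))
    {I : κ → Finset ι} (hI : Pairwise (Disjoint on I)) :
    iIndepFun (fun k ω (i : I k) => f i ω) μ := by
  classical
  have := hf.isProbabilityMeasure
  rw [iIndepFun_iff]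
  intro S
  induction S using Finset.induction_on with
  | empty => intro t _; simp
  | insert a s ha ih =>
    intro t ht
    rw [Finset.set_biInter_insert, Finset.prod_insert ha,
      ← ih fun k hk => ht k (Finset.mem_insert_of_mem hk)]
    have hdisj : Disjoint (I a) (s.biUnion I) :=
      (Finset.disjoint_biUnion_right _ _ _).2 fun k hk => hI fun hak => ha (hak ▸ hk)
    have hblock_le : ∀ k ∈ s, MeasurableSpace.comap (fun ω (i : I k) => f i ω) inferInstance ≤
        MeasurableSpace.comap (fun ω (i : s.biUnion I) => f i ω) inferInstance := by
      intro k hk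
      have hrestrict : Measurable fun (y : s.biUnion I → β) (i : I k) =>
          y ⟨i, Finset.mem_biUnion.2 ⟨k, hk, i.2⟩⟩ :=
        measurable_pi_lambda _ fun i => measurable_pi_apply _
      exact (hrestrict.comp (comap_measurable fun ω (i : s.biUnion I) => f i ω)).comap_le
    refine (Indep_iff _ _ μ).1 ((IndepFun_iff_Indep _ _ μ).1
      (hf.indepFun_finset (I a) (s.biUnion I) hdisj hmeas)) _ _
      (ht a (Finset.mem_insert_self a s)) ?_
    exact Finset.measurableSet_biInter s fun k hk =>
      hblock_le k hk _ (ht k (Finset.mem_insert_of_mem hk))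

theorem pairs {U : ℕ → Ω → β} (hU : iIndepFun U μ) (hmeas : ∀ i, Measurable (U i)) :
    iIndepFun (fun k ω => (U (2 * k) ω, U (2 * k + 1) ω)) μ := by
  have hI : Pairwise (Disjoint on fun k : ℕ => ({2 * k, 2 * k + 1} : Finset ℕ)) := by
    intro k l hkl
    simp only [Function.onFun, Finset.disjoint_insert_left, Finset.disjoint_insert_right,
      Finset.disjoint_singleton, Finset.mem_insert, Finset.mem_singleton]
    omega
  exact (hU.blocks hmeas hI).comp (fun k y => (y ⟨2 * k, by simp⟩, y ⟨2 * k + 1, by simp⟩))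
    fun k => by fun_prop

end ProbabilityTheory.iIndepFun

theorem ProbabilityTheory.IndepFun.measure_prodMk_preimage {Ω β γ : Type*} [MeasurableSpace Ω]
    [MeasurableSpace β] [MeasurableSpace γ] {μ : Measure Ω} [IsFiniteMeasure μ] {X : Ω → β}
    {Y : Ω → γ} (hXY : IndepFun X Y μ) (hX : Measurable X) (hY : Measurable Y) {D : Set (β × γ)}
    (hD : MeasurableSet D) :
    μ ((fun ω => (X ω, Y ω)) ⁻¹' D) = ((μ.map X).prod (μ.map Y)) D := by
  rw [← Measure.map_apply (hX.prodMk hY) hD,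
    (indepFun_iff_map_prod_eq_prod_map_map hX.aemeasurable hY.aemeasurable).1 hXY]

section HittingTime

variable {Ω β : Type*}

noncomputable def pairHittingTime (U : ℕ → Ω → β) (D : Set (β × β)) (ω : Ω) : ℕ∞ :=
  sInf ((fun n : ℕ => (n : ℕ∞)) '' {n : ℕ | 1 ≤ n ∧ (U (n - 1) ω, U n ω) ∈ D})

variable {U : ℕ → Ω → β} {D : Set (β × β)}

theorem setOf_natCast_lt_pairHittingTime (n : ℕ) :
    {ω | (n : ℕ∞) < pairHittingTime U D ω} =
      ⋂ m ∈ Finset.Icc 1 n, (fun ω => (U (m - 1) ω, U m ω)) ⁻¹' Dᶜ := by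
  ext ω
  simp only [pairHittingTime, Set.mem_ofPred_eq, ENat.natCast_lt_sInf_image_natCast_iff,
    Set.mem_iInter, Finset.mem_Icc, Set.mem_preimage, Set.mem_compl_iff]
  constructor
  · intro h m hm hD
    exact absurd (h m ⟨hm.1, hD⟩) (by omega)
  · intro h m hm
    by_contra hmn
    exact h m ⟨hm.1, by omega⟩ hm.2

variable [MeasurableSpace Ω] [MeasurableSpace β]

theorem measurableSet_natCast_lt_pairHittingTime (hU : ∀ i, Measurable (U i))
    (hD : MeasurableSet D) (n : ℕ) :
    MeasurableSet {ω | (n : ℕ∞) < pairHittingTime U D ω} := by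
  rw [setOf_natCast_lt_pairHittingTime]
  exact Finset.measurableSet_biInter _ fun m _ => ((hU _).prodMk (hU _)) hD.compl

theorem measure_natCast_lt_pairHittingTime_le {μ : Measure Ω} (hU : ∀ i, Measurable (U i))
    (hind : iIndepFun U μ) (hD : MeasurableSet D) (n : ℕ) :
    μ {ω | (n : ℕ∞) < pairHittingTime U D ω} ≤
      ∏ k ∈ Finset.range (n / 2), μ ((fun ω => (U (2 * k) ω, U (2 * k + 1) ω)) ⁻¹' Dᶜ) := by
  rw [← (hind.pairs hU).measure_inter_preimage_eq_mul _ fun _ _ => hD.compl]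
  apply measure_mono
  rw [setOf_natCast_lt_pairHittingTime]
  intro ω hω
  simp only [Set.mem_iInter, Finset.mem_Icc, Finset.mem_range] at hω ⊢
  intro k hk
  simpa using hω (2 * k + 1) ⟨by omega, by omega⟩

end HittingTime

section TailBounds

variable {Ω : Type*} [MeasurableSpace Ω] {μ : Measure Ω} {N : Ω → ℕ∞} {r : ℝ≥0∞}

theorem measure_eq_top_eq_zero_of_tail_le (hr : r < 1)
    (htail : ∀ n : ℕ, μ {ω | (n : ℕ∞) < N ω} ≤ r ^ (n / 2)) :
    μ {ω | N ω = ⊤} = 0 := by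
  refine le_antisymm (ge_of_tendsto' (ENNReal.tendsto_pow_atTop_nhds_zero_of_lt_one hr)
    fun m => ?_) zero_le
  calc μ {ω | N ω = ⊤} ≤ μ {ω | ((2 * m : ℕ) : ℕ∞) < N ω} :=
        measure_mono fun ω (hω : N ω = ⊤) => show _ < N ω from hω ▸ ENat.natCast_lt_top _
    _ ≤ r ^ m := by simpa using htail (2 * m)

theorem ite_top_pow_toNat_le_tsum {σ : ℝ≥0∞} (hσ : 1 ≤ σ) (m : ℕ∞) :
    (if m = ⊤ then ⊤ else σ ^ m.toNat) ≤ 1 + ∑' n : ℕ, if (n : ℕ∞) < m then σ ^ (n + 1) else 0 := by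
  induction m using ENat.recTopCoe with
  | top =>
    simp only [if_true, ENat.natCast_lt_top]
    refine le_add_left ?_
    calc ⊤ = ∑' _ : ℕ, (1 : ℝ≥0∞) := (ENNReal.tsum_const_eq_top_of_ne_zero one_ne_zero).symm
      _ ≤ ∑' n : ℕ, σ ^ (n + 1) := ENNReal.tsum_le_tsum fun n => one_le_pow₀ hσ
  | coe m =>
    cases m with
    | zero => simp
    | succ k =>
      simp only [ENat.natCast_ne_top, if_false, ENat.toNat_natCast]
      refine le_add_left (le_trans ?_ (ENNReal.le_tsum k))
      rw [if_pos (by exact_mod_cast k.lt_succ_self)]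

theorem tsum_pow_succ_mul_pow_div_two_lt_top {σ : ℝ≥0∞} (hσ : σ ≠ ⊤) (hσr : σ ^ 2 * r < 1) :
    ∑' n : ℕ, σ ^ (n + 1) * r ^ (n / 2) < ⊤ := by
  rw [← tsum_even_add_odd ENNReal.summable ENNReal.summable]
  have heven : ∀ k, σ ^ (2 * k + 1) * r ^ (2 * k / 2) = σ * (σ ^ 2 * r) ^ k := fun k => by
    rw [Nat.mul_div_cancel_left k two_pos]; ring
  have hodd : ∀ k, σ ^ (2 * k + 1 + 1) * r ^ ((2 * k + 1) / 2) = σ ^ 2 * (σ ^ 2 * r) ^ k :=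
    fun k => by rw [show (2 * k + 1) / 2 = k by omega]; ring
  simp only [heven, hodd, ENNReal.tsum_mul_left, ENNReal.tsum_geometric]
  have hgeom : (1 - σ ^ 2 * r)⁻¹ ≠ ⊤ := ENNReal.inv_ne_top.2 (tsub_pos_of_lt hσr).ne'
  exact ENNReal.add_lt_top.2 ⟨ENNReal.mul_lt_top hσ.lt_top hgeom.lt_top,
    ENNReal.mul_lt_top (ENNReal.pow_lt_top hσ.lt_top) hgeom.lt_top⟩

theorem lintegral_ite_top_pow_toNat_lt_top [IsFiniteMeasure μ]
    (hN : ∀ n : ℕ, MeasurableSet {ω | (n : ℕ∞) < N ω}) {σ : ℝ≥0∞} (hσ : 1 ≤ σ) (hσtop : σ ≠ ⊤)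
    (hσr : σ ^ 2 * r < 1) (htail : ∀ n : ℕ, μ {ω | (n : ℕ∞) < N ω} ≤ r ^ (n / 2)) :
    ∫⁻ ω, (if N ω = ⊤ then ⊤ else σ ^ (N ω).toNat) ∂μ < ⊤ := by
  calc ∫⁻ ω, (if N ω = ⊤ then ⊤ else σ ^ (N ω).toNat) ∂μ
      ≤ ∫⁻ ω, 1 + ∑' n : ℕ, {ω | (n : ℕ∞) < N ω}.indicator (fun _ => σ ^ (n + 1)) ω ∂μ :=
        lintegral_mono fun ω => by
          simpa only [Set.indicator_apply, Set.mem_ofPred_eq] using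
            ite_top_pow_toNat_le_tsum hσ (N ω)
    _ = μ Set.univ + ∑' n : ℕ, σ ^ (n + 1) * μ {ω | (n : ℕ∞) < N ω} := by
        rw [lintegral_add_left measurable_const, lintegral_const, one_mul,
          lintegral_tsum fun n => (measurable_const.indicator (hN n)).aemeasurable]
        simp only [lintegral_indicator_const (hN _)]
    _ ≤ μ Set.univ + ∑' n : ℕ, σ ^ (n + 1) * r ^ (n / 2) := by
        gcongr with n
        exact htail n
    _ < ⊤ := ENNReal.add_lt_top.2 ⟨measure_lt_top μ _,
        tsum_pow_succ_mul_pow_div_two_lt_top hσtop hσr⟩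

end TailBounds

def switchSet (p q : ℝ) : Set (ℝ × ℝ) :=
  Set.Iio p ×ˢ Set.Ico p (p + q) ∪ Set.Ico p (p + q) ×ˢ Set.Iio p

theorem mem_switchSet {p q : ℝ} {z : ℝ × ℝ} :
    z ∈ switchSet p q ↔
      (z.1 < p ∧ p ≤ z.2 ∧ z.2 < p + q) ∨ (z.2 < p ∧ p ≤ z.1 ∧ z.1 < p + q) := by
  simp only [switchSet, Set.mem_union, Set.mem_prod, Set.mem_Iio, Set.mem_Ico]
  tauto

theorem measurableSet_switchSet (p q : ℝ) : MeasurableSet (switchSet p q) :=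
  (measurableSet_Iio.prod measurableSet_Ico).union (measurableSet_Ico.prod measurableSet_Iio)

theorem uniform_prod_uniform_switchSet {p q : ℝ} (hp : 0 ≤ p) (hq : 0 ≤ q) (hpq : p + q ≤ 1) :
    ((volume.restrict (Set.Ico (0 : ℝ) 1)).prod (volume.restrict (Set.Ico (0 : ℝ) 1)))
      (switchSet p q) = ENNReal.ofReal (2 * p * q) := by
  have hA : volume.restrict (Set.Ico (0 : ℝ) 1) (Set.Iio p) = ENNReal.ofReal p := by
    rw [Measure.restrict_apply measurableSet_Iio, Set.inter_comm, Set.Ico_inter_Iio,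
      min_eq_right (by linarith), Real.volume_Ico, sub_zero]
  have hB : volume.restrict (Set.Ico (0 : ℝ) 1) (Set.Ico p (p + q)) = ENNReal.ofReal q := by
    rw [Measure.restrict_apply measurableSet_Ico,
      Set.inter_eq_left.2 (Set.Ico_subset_Ico hp hpq), Real.volume_Ico, add_sub_cancel_left]
  have hdisj : Disjoint (Set.Iio p ×ˢ Set.Ico p (p + q)) (Set.Ico p (p + q) ×ˢ Set.Iio p) :=
    Set.disjoint_prod.2 (Or.inl (Set.disjoint_left.2 fun x hx hx' => not_le.2 hx hx'.1))
  rw [switchSet, measure_union hdisj (measurableSet_Ico.prod measurableSet_Iio),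
    Measure.prod_prod, Measure.prod_prod, hA, hB, ← ENNReal.ofReal_mul hp,
    ← ENNReal.ofReal_mul hq, ← ENNReal.ofReal_add (by positivity) (by positivity)]
  ring_nf

theorem measure_preimage_switchSet_compl {Ω : Type*} [MeasurableSpace Ω] {P : Measure Ω}
    [IsProbabilityMeasure P] {X Y : Ω → ℝ} (hXY : IndepFun X Y P) (hX : Measurable X)
    (hY : Measurable Y) (hXlaw : P.map X = volume.restrict (Set.Ico (0 : ℝ) 1))
    (hYlaw : P.map Y = volume.restrict (Set.Ico (0 : ℝ) 1)) {p q : ℝ} (hp : 0 ≤ p) (hq : 0 ≤ q)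
    (hpq : p + q ≤ 1) :
    P ((fun ω => (X ω, Y ω)) ⁻¹' (switchSet p q)ᶜ) = ENNReal.ofReal (1 - 2 * p * q) := by
  rw [Set.preimage_compl, prob_compl_eq_one_sub ((hX.prodMk hY) (measurableSet_switchSet p q)),
    hXY.measure_prodMk_preimage hX hY (measurableSet_switchSet p q), hXlaw, hYlaw,
    uniform_prod_uniform_switchSet hp hq hpq, ← ENNReal.ofReal_one,
    ← ENNReal.ofReal_sub _ (by positivity)]

/-- Geometric domination claim in continuation of Example 1 (alternating renewal):
`(U_n)` i.i.d. uniform on `[0,1)`, `p, q > 0`, `p + q ≤ 1`,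
`N = inf{n ≥ 1 : (U_{n−1} < p ∧ p ≤ U_n < p+q) ∨ (U_n < p ∧ p ≤ U_{n−1} < p+q)}`.
Then `N` is a.s. finite, `E[s^N] < ∞` for every `s ≥ 1` with `s²(1−2pq) < 1`, and `N` is
stochastically dominated by twice a geometric random variable with success probability
`2pq`: `P(N > n) ≤ (1−2pq)^{⌊n/2⌋}`. -/
theorem stmt11 {Ω : Type*} [MeasurableSpace Ω] (P : Measure Ω) [IsProbabilityMeasure P]
    (U : ℕ → Ω → ℝ) (hUmeas : ∀ i, Measurable (U i))
    (hIndep : ProbabilityTheory.iIndepFun U P)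
    (hUnif : ∀ i, Measure.map (U i) P = volume.restrict (Set.Ico (0 : ℝ) 1))
    (p q : ℝ) (hp : 0 < p) (hq : 0 < q) (hpq : p + q ≤ 1)
    (N : Ω → ℕ∞)
    (hN : ∀ ω, N ω = sInf ((fun n : ℕ => (n : ℕ∞)) ''
      {n : ℕ | 1 ≤ n ∧
        ((U (n - 1) ω < p ∧ p ≤ U n ω ∧ U n ω < p + q) ∨
         (U n ω < p ∧ p ≤ U (n - 1) ω ∧ U (n - 1) ω < p + q))})) :
    P {ω | N ω = ⊤} = 0 ∧
    (∀ s : ℝ, 1 ≤ s → s ^ 2 * (1 - 2 * p * q) < 1 →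
      ∫⁻ ω, (if N ω = ⊤ then (⊤ : ℝ≥0∞)
        else ENNReal.ofReal (s ^ (N ω).toNat)) ∂P < ⊤) ∧
    (∀ n : ℕ, P {ω | (n : ℕ∞) < N ω} ≤ ENNReal.ofReal ((1 - 2 * p * q) ^ (n / 2))) := by
  have hτ : N = pairHittingTime U (switchSet p q) := funext fun ω => by
    simp only [hN ω, pairHittingTime, mem_switchSet]
  subst hτ
  have hr : 0 ≤ 1 - 2 * p * q := by nlinarith [sq_nonneg (p - q)]
  have hr1 : ENNReal.ofReal (1 - 2 * p * q) < 1 :=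
    ENNReal.ofReal_lt_one.2 (by nlinarith [mul_pos hp hq])
  have htail (n : ℕ) : P {ω | (n : ℕ∞) < pairHittingTime U (switchSet p q) ω} ≤
      ENNReal.ofReal (1 - 2 * p * q) ^ (n / 2) := by
    refine (measure_natCast_lt_pairHittingTime_le hUmeas hIndep
      (measurableSet_switchSet p q) n).trans_eq ?_
    rw [Finset.prod_congr rfl fun k _ => measure_preimage_switchSet_compl
      (hIndep.indepFun (by omega : 2 * k ≠ 2 * k + 1)) (hUmeas _) (hUmeas _) (hUnif _) (hUnif _)
      hp.le hq.le hpq, Finset.prod_const, Finset.card_range]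
  refine ⟨measure_eq_top_eq_zero_of_tail_le hr1 htail, fun s hs1 hs => ?_,
    fun n => by rw [ENNReal.ofReal_pow hr]; exact htail n⟩
  simp_rw [ENNReal.ofReal_pow (zero_le_one.trans hs1)]
  refine lintegral_ite_top_pow_toNat_lt_top
    (measurableSet_natCast_lt_pairHittingTime hUmeas (measurableSet_switchSet p q))
    (ENNReal.one_le_ofReal.2 hs1) ENNReal.ofReal_ne_top ?_ htail
  rw [← ENNReal.ofReal_pow (zero_le_one.trans hs1), ← ENNReal.ofReal_mul (by positivity)]
  exact ENNReal.ofReal_lt_one.2 hs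
end

section
/- φ is antitone for the pointwise order: if w, η ∈ {0,1}^{ℕ₊} satisfy w_i ≥ η_i for all i ≥ 1, then φ(w) ≤ φ(η). Consequently, for any constants p₁ ≥ 0 and c ≥ 0, the kernel p(1|w) := p₁(1 − c·φ(w)) is monotone nondecreasing in w for the pointwise order. -/
open scoped ENNReal

/-- `T(w) = inf{k ≥ 1 : (1/k)·Σ_{i=1}^k w_i ≥ σ}` (value `⊤` if no such `k`); the sequence
`w` is indexed so that `w n` is the letter `w_{n+1}` of the paper. -/
noncomputable def hittingTime (σ : ℝ) (w : ℕ → Bool) : ℕ∞ :=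
  sInf ((fun k : ℕ => (k : ℕ∞)) ''
    {k : ℕ | 1 ≤ k ∧ σ * (k : ℝ) ≤ ∑ i ∈ Finset.range k, (if w i then (1 : ℝ) else 0)})

/-- `φ(w) = Σ_{i=1}^∞ ( β(i)·1{w_i = 0, T(w) > i} + γ(i)·1{w_i = 0, T(w) ≤ i} )`;
here `β n`, `γ n` stand for the paper's `β(n+1)`, `γ(n+1)`. -/
noncomputable def phiKernel (σ : ℝ) (β γ : ℕ → ℝ) (w : ℕ → Bool) : ℝ :=
  ∑' n : ℕ,
    ((if w n = false ∧ ((n : ℕ∞) + 1) < hittingTime σ w then β n else 0) +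
     (if w n = false ∧ hittingTime σ w ≤ (n : ℕ∞) + 1 then γ n else 0))

/-!
More ones in `w` can only make the running averages larger, so the hitting time `T(w)`
decreases. Each summand of `φ` is antitone in the letter `w_i` and monotone in `T`
(it drops from `β(i)` to `γ(i) ≤ β(i)` once `T ≤ i`), hence antitone in `w`; domination by
the summable `β` lets us sum the termwise inequalities.
-/

theorem hittingTime_antitone (σ : ℝ) : Antitone (hittingTime σ) := by
  intro η w hle
  refine sInf_le_sInf (Set.image_mono fun k ⟨hk, hsum⟩ => ⟨hk, hsum.trans ?_⟩)
  refine Finset.sum_le_sum fun i _ => ?_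
  have := hle i
  revert this
  cases η i <;> cases w i <;> simp

section Summand

variable (β γ : ℕ → ℝ) (T : ℕ∞) (n : ℕ)

noncomputable def phiSummand (b : Bool) : ℝ :=
  (if b = false ∧ (n : ℕ∞) + 1 < T then β n else 0) +
  (if b = false ∧ T ≤ (n : ℕ∞) + 1 then γ n else 0)

theorem phiKernel_eq_tsum_phiSummand (σ : ℝ) (w : ℕ → Bool) :
    phiKernel σ β γ w = ∑' n, phiSummand β γ (hittingTime σ w) n (w n) :=
  rfl

@[simp]
theorem phiSummand_true : phiSummand β γ T n true = 0 := by
  simp [phiSummand]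

@[simp]
theorem phiSummand_false :
    phiSummand β γ T n false = if (n : ℕ∞) + 1 < T then β n else γ n := by
  by_cases h : (n : ℕ∞) + 1 < T
  · simp [phiSummand, h, not_le.mpr h]
  · simp [phiSummand, h, not_lt.mp h]

variable {β γ}

theorem phiSummand_nonneg (hβγ : ∀ i, γ i ≤ β i) (hγ : ∀ i, 0 ≤ γ i) (b : Bool) :
    0 ≤ phiSummand β γ T n b := by
  cases b
  · rw [phiSummand_false]
    split_ifs
    exacts [(hγ n).trans (hβγ n), hγ n]
  · simp

theorem phiSummand_le (hβγ : ∀ i, γ i ≤ β i) (hγ : ∀ i, 0 ≤ γ i) (b : Bool) :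
    phiSummand β γ T n b ≤ β n := by
  cases b
  · rw [phiSummand_false]
    split_ifs
    exacts [le_rfl, hβγ n]
  · simpa using (hγ n).trans (hβγ n)

theorem phiSummand_mono (hβγ : ∀ i, γ i ≤ β i) (hγ : ∀ i, 0 ≤ γ i) {T T' : ℕ∞}
    (hT : T ≤ T') {b b' : Bool} (hb : b' ≤ b) :
    phiSummand β γ T n b ≤ phiSummand β γ T' n b' := by
  cases b
  · obtain rfl : b' = false := le_bot_iff.mp hb
    simp only [phiSummand_false]
    split_ifs with h h'
    exacts [le_rfl, absurd (h.trans_le hT) h', hβγ n, le_rfl]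
  · simpa using phiSummand_nonneg T' n hβγ hγ b'

end Summand

theorem phiKernel_antitone (σ : ℝ) {β γ : ℕ → ℝ} (hβγ : ∀ i, γ i ≤ β i)
    (hγ : ∀ i, 0 ≤ γ i) (hβ : Summable β) : Antitone (phiKernel σ β γ) := by
  intro η w hle
  have summable (v : ℕ → Bool) : Summable fun n => phiSummand β γ (hittingTime σ v) n (v n) :=
    hβ.of_nonneg_of_le (fun n => phiSummand_nonneg _ n hβγ hγ _)
      (fun n => phiSummand_le _ n hβγ hγ _)
  simp only [phiKernel_eq_tsum_phiSummand]
  exact (summable w).tsum_le_tsum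
    (fun n => phiSummand_mono n hβγ hγ (hittingTime_antitone σ hle) (hle n)) (summable η)

theorem stmt13_general (σ : ℝ) (β γ : ℕ → ℝ)
    (hβγ : ∀ i, γ i ≤ β i) (hγ : ∀ i, 0 ≤ γ i) (hβ : Summable β) :
    (∀ w η : ℕ → Bool, (∀ i, η i ≤ w i) →
      phiKernel σ β γ w ≤ phiKernel σ β γ η) ∧
    (∀ p₁ c : ℝ, 0 ≤ p₁ → 0 ≤ c → ∀ w η : ℕ → Bool, (∀ i, η i ≤ w i) →
      p₁ * (1 - c * phiKernel σ β γ η) ≤ p₁ * (1 - c * phiKernel σ β γ w)) := by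
  have hφ := phiKernel_antitone σ hβγ hγ hβ
  refine ⟨fun w η hle => hφ hle, fun p₁ c hp₁ hc w η hle => ?_⟩
  gcongr
  exact hφ hle

/-- Monotonicity claim of Example "pezzoforte": `φ` is antitone for the pointwise order on
`{0,1}^{ℕ₊}`, and consequently the kernel `p(1|w) = p₁(1 − c·φ(w))` is monotone
nondecreasing in `w`. -/
theorem stmt13 (σ : ℝ) (hσ : 0 < σ) (β γ : ℕ → ℝ)
    (hβγ : ∀ i, γ i ≤ β i) (hγ : ∀ i, 0 ≤ γ i) (hβ : Summable β) :
    (∀ w η : ℕ → Bool, (∀ i, η i ≤ w i) →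
      phiKernel σ β γ w ≤ phiKernel σ β γ η) ∧
    (∀ p₁ c : ℝ, 0 ≤ p₁ → 0 ≤ c → ∀ w η : ℕ → Bool, (∀ i, η i ≤ w i) →
      p₁ * (1 - c * phiKernel σ β γ η) ≤ p₁ * (1 - c * phiKernel σ β γ w)) :=
  stmt13_general σ β γ hβγ hγ hβ
end

section
/- Σ_{k=1}^∞ Π_{i=1}^k a_i < ∞. -/
/-!
Since `1 - x ≤ exp (-x)`, the product `∏_{i ≤ k} a_i` is at most `exp (-c ∑_{i ≤ k} T_i)`, where
`T_i = ∑_{j > i} j^{-α}`. The tails decrease and `T_k ≥ k (2k)^{-α}` (its first `k` terms), so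
`∑_{i ≤ k} T_i ≥ k T_k ≥ 2^{-α} k^{2-α}`. As `2 - α > 0`, the products are dominated by the
summable stretched exponential `exp (-c 2^{-α} k^{2-α})`.
-/

open Finset Real

theorem summable_exp_neg_mul_rpow {d β : ℝ} (hd : 0 < d) (hβ : 0 < β) :
    Summable fun k : ℕ => exp (-(d * (k : ℝ) ^ β)) := by
  have hlo := (isLittleO_exp_neg_mul_rpow_atTop hd (-2 / β)).comp_tendsto
    ((tendsto_rpow_atTop hβ).comp tendsto_natCast_atTop_atTop)
  refine summable_of_isBigO_nat (summable_nat_rpow.2 (by norm_num : (-2 : ℝ) < -1)) ?_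
  refine hlo.isBigO.congr (fun k => by simp [neg_mul]) fun k => ?_
  simp only [Function.comp_apply]
  rw [← rpow_mul k.cast_nonneg, mul_div_cancel₀ _ hβ.ne']

theorem Finset.prod_le_exp_neg_sum {ι : Type*} {s : Finset ι} {a x : ι → ℝ}
    (h0 : ∀ i ∈ s, 0 ≤ a i) (h : ∀ i ∈ s, a i ≤ 1 - x i) :
    ∏ i ∈ s, a i ≤ exp (-∑ i ∈ s, x i) :=
  calc ∏ i ∈ s, a i ≤ ∏ i ∈ s, exp (-x i) :=
        prod_le_prod h0 fun i hi => (h i hi).trans (by linarith [add_one_le_exp (-x i)])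
    _ = exp (-∑ i ∈ s, x i) := by rw [← sum_neg_distrib, exp_sum]

/-- The tail `T_k = ∑_{i > k} i^{-α}`, reindexed by `i = j + k + 1`. -/
noncomputable def rpowTail (α : ℝ) (k : ℕ) : ℝ := ∑' j : ℕ, ((j : ℝ) + k + 1) ^ (-α)

section rpowTail

variable {α : ℝ}

theorem summable_natCast_add_rpow_neg (hα : 1 < α) (k : ℕ) :
    Summable fun j : ℕ => ((j : ℝ) + k + 1) ^ (-α) := by
  have := (summable_nat_add_iff (k + 1)).2 (summable_nat_rpow.2 (by linarith : -α < -1))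
  simpa [add_assoc] using this

theorem rpowTail_zero : rpowTail α 0 = ∑' i : ℕ, ((i : ℝ) + 1) ^ (-α) := by
  simp [rpowTail]

theorem rpowTail_antitone (hα : 1 < α) : Antitone (rpowTail α) := fun i k hik =>
  Summable.tsum_le_tsum (fun j => rpow_le_rpow_of_nonpos (by positivity)
    (by gcongr) (by linarith)) (summable_natCast_add_rpow_neg hα k)
    (summable_natCast_add_rpow_neg hα i)

theorem natCast_mul_rpow_le_rpowTail (hα : 1 < α) (k : ℕ) :
    k * (2 * k : ℝ) ^ (-α) ≤ rpowTail α k := by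
  calc (k : ℝ) * (2 * k : ℝ) ^ (-α) = ∑ _j ∈ range k, (2 * k : ℝ) ^ (-α) := by simp
    _ ≤ ∑ j ∈ range k, ((j : ℝ) + k + 1) ^ (-α) := by
        refine sum_le_sum fun j hj => rpow_le_rpow_of_nonpos (by positivity) ?_ (by linarith)
        have : (j : ℝ) + 1 ≤ k := by exact_mod_cast mem_range.1 hj
        linarith
    _ ≤ rpowTail α k := (summable_natCast_add_rpow_neg hα k).sum_le_tsum _
        fun _ _ => rpow_nonneg (by positivity) _

theorem rpow_two_sub_le_sum_rpowTail (hα : α ∈ Set.Ioo 1 2) (k : ℕ) :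
    (2 : ℝ) ^ (-α) * (k : ℝ) ^ (2 - α) ≤ ∑ i ∈ Icc 1 k, rpowTail α i := by
  obtain ⟨h1, h2⟩ := hα
  rcases k.eq_zero_or_pos with rfl | hk
  · simp [zero_rpow (by linarith : 2 - α ≠ 0)]
  have hk0 : (0 : ℝ) < k := by exact_mod_cast hk
  calc (2 : ℝ) ^ (-α) * (k : ℝ) ^ (2 - α) = k * (k * (2 * k : ℝ) ^ (-α)) := by
        rw [mul_rpow zero_le_two hk0.le, show 2 - α = 1 + 1 + -α by ring,
          rpow_add hk0, rpow_add hk0, rpow_one]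
        ring
    _ ≤ k * rpowTail α k := by gcongr; exact natCast_mul_rpow_le_rpowTail h1 k
    _ = ∑ _i ∈ Icc 1 k, rpowTail α k := by simp
    _ ≤ ∑ i ∈ Icc 1 k, rpowTail α i :=
        sum_le_sum fun i hi => rpowTail_antitone h1 (mem_Icc.1 hi).2

end rpowTail

/-- End of Example "pezzoforte": for `α ∈ (1,2)` and `c > 0` with
`c·Σ_{i=1}^∞ i^{−α} < 1`, the sequence `a_k = 1 − c·Σ_{i=k+1}^∞ i^{−α}` (so `0 < a_k < 1`)
satisfies `Σ_{k=1}^∞ Π_{i=1}^k a_i < ∞`. -/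
theorem stmt14 (α c : ℝ) (hα : α ∈ Set.Ioo (1 : ℝ) 2) (hc : 0 < c)
    (hsmall : c * (∑' i : ℕ, ((i : ℝ) + 1) ^ (-α)) < 1)
    (a : ℕ → ℝ)
    (ha : ∀ k : ℕ, 1 ≤ k → a k = 1 - c * ∑' j : ℕ, ((j : ℝ) + (k : ℝ) + 1) ^ (-α)) :
    Summable (fun k : ℕ => ∏ i ∈ Finset.Icc 1 k, a i) := by
  have ha' : ∀ i, 1 ≤ i → a i = 1 - c * rpowTail α i := ha
  have ha_nonneg : ∀ i, 1 ≤ i → 0 ≤ a i := fun i hi => by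
    have := mul_le_mul_of_nonneg_left (rpowTail_antitone hα.1 (Nat.zero_le i)) hc.le
    rw [rpowTail_zero] at this
    rw [ha' i hi]
    linarith
  have hprod (k : ℕ) : ∏ i ∈ Icc 1 k, a i ≤ exp (-(c * 2 ^ (-α) * (k : ℝ) ^ (2 - α))) :=
    calc ∏ i ∈ Icc 1 k, a i ≤ exp (-∑ i ∈ Icc 1 k, c * rpowTail α i) :=
          prod_le_exp_neg_sum (fun i hi => ha_nonneg i (mem_Icc.1 hi).1)
            fun i hi => (ha' i (mem_Icc.1 hi).1).le
      _ ≤ exp (-(c * 2 ^ (-α) * (k : ℝ) ^ (2 - α))) := by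
          rw [← mul_sum, mul_assoc]
          gcongr
          exact rpow_two_sub_le_sum_rpowTail hα k
  exact (summable_exp_neg_mul_rpow (by positivity) (by linarith [hα.2])).of_nonneg_of_le
    (fun k => prod_nonneg fun i hi => ha_nonneg i (mem_Icc.1 hi).1) hprod
end

section
/- The following are equivalent: (i) for every g ∈ G and every w ∈ ℋ, a_k(g|w) converges (nondecreasingly) to p(g|w) as k → ∞; (ii) for every w ∈ ℋ, a_k(w) := Σ_{g∈G} a_k(g|w) converges (nondecreasingly) to 1 as k → ∞. -/
open Filter

/-- `a_k(g|w) := inf{ p(g|z) : z ∈ ℋ, z_{−i} = w_{−i} for 1 ≤ i ≤ k }`; histories are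
indexed so that `w n` is the paper's `w_{−(n+1)}`. -/
noncomputable def infKernel {G : Type*} (H : Set (ℕ → G)) (p : G → (ℕ → G) → ℝ)
    (k : ℕ) (g : G) (w : ℕ → G) : ℝ :=
  sInf (p g '' {z ∈ H | ∀ i : ℕ, i < k → z i = w i})

/-! The `a_k(·|w)` are minorants `0 ≤ a_k(·|w) ≤ p(·|w)` of a probability vector, nondecreasing
in `k` because the infimum runs over shrinking sets of histories. If `∑_g a_k(g|w) → 1`, then
`p(g|w) - a_k(g|w) ≤ ∑_g (p(g|w) - a_k(g|w)) → 0`; conversely, pointwise convergence gives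
convergence of the sums by dominated convergence for series, with bound `p(·|w)`. -/

section Minorants

variable {ι α : Type*} {l : Filter α} {p : ι → ℝ} {s : ℝ}

lemma sub_le_sub_tsum_of_le {q : ι → ℝ} (hp : HasSum p s) (hq₀ : ∀ i, 0 ≤ q i)
    (hq : ∀ i, q i ≤ p i) (i : ι) :
    p i - q i ≤ s - ∑' j, q j := by
  have hqs : Summable q := .of_nonneg_of_le hq₀ hq hp.summable
  calc p i - q i ≤ ∑' j, (p j - q j) :=
        (hp.summable.sub hqs).le_tsum i fun j _ => sub_nonneg.2 (hq j)
    _ = s - ∑' j, q j := by rw [hp.summable.tsum_sub hqs, hp.tsum_eq]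

lemma tendsto_apply_of_tendsto_tsum {f : α → ι → ℝ} (hp : HasSum p s) (hf₀ : ∀ k i, 0 ≤ f k i)
    (hf : ∀ k i, f k i ≤ p i) (hlim : Tendsto (fun k => ∑' i, f k i) l (nhds s)) (i : ι) :
    Tendsto (fun k => f k i) l (nhds (p i)) := by
  have hgap : Tendsto (fun k => s - ∑' j, f k j) l (nhds 0) := by
    simpa using (tendsto_const_nhds (x := s)).sub hlim
  have hdiff : Tendsto (fun k => p i - f k i) l (nhds 0) :=
    squeeze_zero' (.of_forall fun k => sub_nonneg.2 (hf k i))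
      (.of_forall fun k => sub_le_sub_tsum_of_le hp (hf₀ k) (hf k) i) hgap
  simpa using (tendsto_const_nhds (x := p i)).sub hdiff

lemma tendsto_tsum_of_tendsto_apply {f : α → ι → ℝ} (hp : HasSum p s) (hf₀ : ∀ k i, 0 ≤ f k i)
    (hf : ∀ k i, f k i ≤ p i) (hlim : ∀ i, Tendsto (fun k => f k i) l (nhds (p i))) :
    Tendsto (fun k => ∑' i, f k i) l (nhds s) := by
  rw [← hp.tsum_eq]
  refine tendsto_tsum_of_dominated_convergence hp.summable hlim (.of_forall fun k i => ?_)
  rw [Real.norm_of_nonneg (hf₀ k i)]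
  exact hf k i

end Minorants

section InfKernel

variable {G : Type*} {H : Set (ℕ → G)} {p : G → (ℕ → G) → ℝ} {w : ℕ → G}

lemma mem_agreeing_histories (hw : w ∈ H) (k : ℕ) :
    w ∈ {z ∈ H | ∀ i : ℕ, i < k → z i = w i} :=
  ⟨hw, fun _ _ => rfl⟩

lemma bddBelow_image_agreeing_histories (hnn : ∀ g, ∀ w ∈ H, 0 ≤ p g w) (k : ℕ) (g : G) :
    BddBelow (p g '' {z ∈ H | ∀ i : ℕ, i < k → z i = w i}) :=
  ⟨0, by rintro _ ⟨z, hz, rfl⟩; exact hnn g z hz.1⟩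

lemma infKernel_nonneg (hnn : ∀ g, ∀ w ∈ H, 0 ≤ p g w) (hw : w ∈ H) (k : ℕ) (g : G) :
    0 ≤ infKernel H p k g w :=
  le_csInf ⟨p g w, Set.mem_image_of_mem _ (mem_agreeing_histories hw k)⟩
    (by rintro _ ⟨z, hz, rfl⟩; exact hnn g z hz.1)

lemma infKernel_le (hnn : ∀ g, ∀ w ∈ H, 0 ≤ p g w) (hw : w ∈ H) (k : ℕ) (g : G) :
    infKernel H p k g w ≤ p g w :=
  csInf_le (bddBelow_image_agreeing_histories hnn k g)
    (Set.mem_image_of_mem _ (mem_agreeing_histories hw k))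

lemma monotone_infKernel (hnn : ∀ g, ∀ w ∈ H, 0 ≤ p g w) (hw : w ∈ H) (g : G) :
    Monotone fun k => infKernel H p k g w := fun k l hkl =>
  csInf_le_csInf (bddBelow_image_agreeing_histories hnn k g)
    ⟨p g w, Set.mem_image_of_mem _ (mem_agreeing_histories hw l)⟩
    (Set.image_mono fun _ ⟨hz, hagree⟩ => ⟨hz, fun i hi => hagree i (hi.trans_le hkl)⟩)

lemma monotone_tsum_infKernel (hnn : ∀ g, ∀ w ∈ H, 0 ≤ p g w) (hw : w ∈ H)
    (hsum : HasSum (fun g => p g w) 1) :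
    Monotone fun k => ∑' g, infKernel H p k g w := by
  have hsummable (k : ℕ) : Summable fun g => infKernel H p k g w :=
    .of_nonneg_of_le (infKernel_nonneg hnn hw k) (infKernel_le hnn hw k) hsum.summable
  exact fun k l hkl =>
    (hsummable k).tsum_le_tsum (fun g => monotone_infKernel hnn hw g hkl) (hsummable l)

end InfKernel

theorem stmt15_general {G : Type*} (H : Set (ℕ → G))
    (p : G → (ℕ → G) → ℝ)
    (hnn : ∀ g, ∀ w ∈ H, 0 ≤ p g w)
    (hsum : ∀ w ∈ H, HasSum (fun g => p g w) 1) :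
    ((∀ g : G, ∀ w ∈ H, Monotone (fun k => infKernel H p k g w) ∧
        Tendsto (fun k => infKernel H p k g w) atTop (nhds (p g w)))
      ↔
     (∀ w ∈ H, Monotone (fun k => ∑' g : G, infKernel H p k g w) ∧
        Tendsto (fun k => ∑' g : G, infKernel H p k g w) atTop (nhds 1))) := by
  constructor
  · intro hconv w hw
    exact ⟨monotone_tsum_infKernel hnn hw (hsum w hw),
      tendsto_tsum_of_tendsto_apply (hsum w hw) (fun k => infKernel_nonneg hnn hw k)
        (fun k => infKernel_le hnn hw k) fun g => (hconv g w hw).2⟩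
  · intro hmass g w hw
    exact ⟨monotone_infKernel hnn hw g,
      tendsto_apply_of_tendsto_tsum (hsum w hw) (fun k => infKernel_nonneg hnn hw k)
        (fun k => infKernel_le hnn hw k) (hmass w hw).2 g⟩

/-- Equivalence of conditions (converge) and (noia) of Section 2: for a kernel `p` on a
nonempty set of histories `ℋ` with `Σ_g p(g|w) = 1`, the quantities
`a_k(g|w)` converge nondecreasingly to `p(g|w)` for every `g` and `w ∈ ℋ` if and only if
`a_k(w) = Σ_g a_k(g|w)` converges nondecreasingly to `1` for every `w ∈ ℋ`. -/
theorem stmt15 {G : Type*} [Countable G] (H : Set (ℕ → G)) (hH : H.Nonempty)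
    (p : G → (ℕ → G) → ℝ)
    (hnn : ∀ g, ∀ w ∈ H, 0 ≤ p g w)
    (hsum : ∀ w ∈ H, HasSum (fun g => p g w) 1) :
    ((∀ g : G, ∀ w ∈ H, Monotone (fun k => infKernel H p k g w) ∧
        Tendsto (fun k => infKernel H p k g w) atTop (nhds (p g w)))
      ↔
     (∀ w ∈ H, Monotone (fun k => ∑' g : G, infKernel H p k g w) ∧
        Tendsto (fun k => ∑' g : G, infKernel H p k g w) atTop (nhds 1))) :=
  stmt15_general H p hnn hsum
end
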